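/- arXiv:1906.05324 — 7 statements merged into one kernel-verified Lean document; each statement's English description precedes it below -/
import Mathlib

section
/- Let d ≥ 2. For every injective tuple x = (x_1,…,x_{d−1}) of points of [0,1) there exists n ∈ ℕ such that A^m(x) = A^n(x) for all m ≥ n; moreover the stable tuple a = A^n(x) satisfies a_1 < a_2 < ⋯ < a_{d−1} and a_i < i/d for every i ∈ {1,…,d−1}. -/
open Set

/-- Thurston's rearrangement map `A` on tuples `x = (x_1, …, x_{d-1})` of points of
`[0,1)` (index `i : Fin (d-1)` corresponds to the `(i+1)`-st coordinate): first replace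
`x` by its non-decreasing rearrangement `x̂ = x ∘ Tuple.sort x`, then subtract `1/d`
from each entry `x̂ i` with `x̂ i ≥ (i+1)/d`. -/
noncomputable def stepA (d : ℕ) (x : Fin (d - 1) → ℝ) : Fin (d - 1) → ℝ :=
  fun i =>
    if (x ∘ Tuple.sort x) i < ((i : ℕ) + 1 : ℝ) / d then (x ∘ Tuple.sort x) i
    else (x ∘ Tuple.sort x) i - 1 / d

/-!
After one application of `A` the tuple is strictly increasing: lowering the entry in position
`j` by `1/d` leaves it at least `j/d`, above every unlowered entry in a position `i < j`.
A strictly increasing tuple lying below all thresholds `(i+1)/d` is fixed by `A`; if instead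
some sorted entry reaches its threshold, `A` lowers the sum of the entries by at least `1/d`.
Entries never drop below `min 0 (min x)`, so the sum is bounded below and can be lowered
only finitely often.
-/

variable {d : ℕ} {x : Fin (d - 1) → ℝ}

lemma cast_pos_of_fin (i : Fin (d - 1)) : (0 : ℝ) < d := by
  have := i.pos
  exact_mod_cast (by omega : 0 < d)

lemma stepA_eq_self (hmono : StrictMono x)
    (hlt : ∀ i : Fin (d - 1), x i < ((i : ℕ) + 1 : ℝ) / d) : stepA d x = x := by
  have hsort : Tuple.sort x = Equiv.refl _ :=
    Tuple.sort_eq_refl_iff_monotone.2 hmono.monotone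
  funext i
  simp only [stepA, hsort, Function.comp_apply, Equiv.refl_apply]
  exact if_pos (hlt i)

lemma stepA_strictMono (hinj : Function.Injective x) : StrictMono (stepA d x) := by
  intro i j hij
  have hd := cast_pos_of_fin i
  have hy : (x ∘ Tuple.sort x) i < (x ∘ Tuple.sort x) j :=
    (Tuple.monotone_sort x).strictMono_of_injective (hinj.comp (Tuple.sort x).injective) hij
  have hgap : ((i : ℕ) + 1 : ℝ) / d + 1 / d ≤ ((j : ℕ) + 1 : ℝ) / d := by
    rw [← add_div]
    gcongr
    exact_mod_cast (hij : (i : ℕ) + 1 ≤ j)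
  have hstep : (0 : ℝ) < 1 / d := by positivity
  unfold stepA
  split_ifs <;> linarith

lemma le_stepA {c : ℝ} (hc : c ≤ 0) (hcx : ∀ i, c ≤ x i) (i : Fin (d - 1)) :
    c ≤ stepA d x i := by
  unfold stepA
  split_ifs with h
  · exact hcx _
  · have : ((i : ℕ) + 1 : ℝ) / d - 1 / d = (i : ℕ) / d := by ring
    have : (0 : ℝ) ≤ (i : ℕ) / d := by positivity
    linarith [not_lt.1 h]

lemma stepA_le_sort (i : Fin (d - 1)) : stepA d x i ≤ (x ∘ Tuple.sort x) i := by
  have hd := cast_pos_of_fin i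
  unfold stepA
  split_ifs
  · exact le_rfl
  · linarith [show (0 : ℝ) < 1 / d by positivity]

lemma sum_stepA_add_le {i₀ : Fin (d - 1)}
    (hi₀ : ((i₀ : ℕ) + 1 : ℝ) / d ≤ (x ∘ Tuple.sort x) i₀) :
    ∑ i, stepA d x i + 1 / d ≤ ∑ i, x i := by
  have hdrop : (x ∘ Tuple.sort x) i₀ - stepA d x i₀ = 1 / d := by
    simp only [stepA, if_neg (not_lt.2 hi₀)]
    ring
  have hsum : 1 / d ≤ ∑ i, ((x ∘ Tuple.sort x) i - stepA d x i) :=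
    hdrop ▸ Finset.single_le_sum (fun i _ => sub_nonneg.2 (stepA_le_sort i))
      (Finset.mem_univ i₀)
  rw [Finset.sum_sub_distrib, Function.comp_def, Equiv.sum_comp (Tuple.sort x) x] at hsum
  linarith

lemma exists_iterate_stepA_lt (x : Fin (d - 1) → ℝ) :
    ∃ n, ∀ i : Fin (d - 1), (stepA d)^[n + 1] x i < ((i : ℕ) + 1 : ℝ) / d := by
  obtain ⟨c, hc0, hcx⟩ : ∃ c ≤ 0, ∀ i, c ≤ x i := by
    obtain ⟨b, hb⟩ := (finite_range x).bddBelow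
    exact ⟨min b 0, min_le_right _ _, fun i => (min_le_left _ _).trans (hb (mem_range_self i))⟩
  have hbound : ∀ n i, c ≤ (stepA d)^[n] x i :=
    Function.Iterate.rec (fun y : Fin (d - 1) → ℝ => ∀ i, c ≤ y i) hcx
      (fun _ hy => le_stepA hc0 hy)
  by_contra! hnot
  obtain ⟨i₀, -⟩ := hnot 0
  have hd := cast_pos_of_fin i₀
  have hdescent : ∀ n : ℕ, ∑ i, (stepA d)^[n] x i + n / d ≤ ∑ i, x i := by
    intro n
    induction n with
    | zero => simp
    | succ n ih =>
      obtain ⟨i, hi⟩ := hnot n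
      rw [Function.iterate_succ_apply'] at hi ⊢
      have := sum_stepA_add_le (hi.trans (stepA_le_sort i))
      push_cast
      rw [add_div]
      linarith
  obtain ⟨n, hn⟩ := exists_nat_gt ((∑ i, x i - ∑ _i : Fin (d - 1), c) * d)
  have hfloor : ∑ _i : Fin (d - 1), c ≤ ∑ i, (stepA d)^[n] x i :=
    Finset.sum_le_sum fun i _ => hbound n i
  linarith [hdescent n, (lt_div_iff₀ hd).2 hn]

theorem stepA_stabilizes_general (d : ℕ) (x : Fin (d - 1) → ℝ)
    (hinj : Function.Injective x) :
    ∃ n : ℕ, (∀ m, n ≤ m → (stepA d)^[m] x = (stepA d)^[n] x) ∧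
      StrictMono ((stepA d)^[n] x) ∧
      ∀ i : Fin (d - 1), (stepA d)^[n] x i < ((i : ℕ) + 1 : ℝ) / d := by
  obtain ⟨n, hlt⟩ := exists_iterate_stepA_lt x
  have hinj' : Function.Injective ((stepA d)^[n] x) :=
    Function.Iterate.rec _ hinj (fun _ hy => (stepA_strictMono hy).injective) n
  have hmono : StrictMono ((stepA d)^[n + 1] x) := by
    rw [Function.iterate_succ_apply']
    exact stepA_strictMono hinj'
  refine ⟨n + 1, fun m hm => ?_, hmono, hlt⟩
  obtain ⟨k, rfl⟩ := Nat.exists_eq_add_of_le' hm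
  rw [Function.iterate_add_apply, Function.iterate_fixed (stepA_eq_self hmono hlt)]

/-- For every injective tuple `x` of points of `[0,1)`, the iterates of
`A` stabilize at some `n`, and the stable tuple `A^[n] x` is strictly increasing with
`(A^[n] x) i < (i+1)/d` for all `i`. -/
theorem stepA_stabilizes (d : ℕ) (hd : 2 ≤ d) (x : Fin (d - 1) → ℝ)
    (hinj : Function.Injective x) (hx : ∀ i, x i ∈ Ico (0 : ℝ) 1) :
    ∃ n : ℕ, (∀ m, n ≤ m → (stepA d)^[m] x = (stepA d)^[n] x) ∧
      StrictMono ((stepA d)^[n] x) ∧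
      ∀ i : Fin (d - 1), (stepA d)^[n] x i < ((i : ℕ) + 1 : ℝ) / d :=
  stepA_stabilizes_general d x hinj
end

section
/- Let d ≥ 2 and let (s_i, t_i)_{i=1}^{d−1} encode a generic degree-d primitive major. For each i let ℓ_i ⊆ ℂ be the closed straight line segment joining e^{2πi s_i} and e^{2πi t_i}, and let D be the open unit disk in ℂ. Then D ∖ ⋃_{i=1}^{d−1} ℓ_i has exactly d connected components, and for each such component C, the Lebesgue measure of the set {α ∈ ℝ/ℤ : e^{2πiα} ∈ closure(C)} equals 1/d. -/
/-!
Inside the disk, the leaf `ℓ_i` is the zero set of the real affine function `leafSide s t i`,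
so the components of the disk minus the leaves are the nonempty convex sign cells of these
functions. A point on the arc side of leaf `i` is a convex combination of points of that arc;
since the leaves are unlinked, the leaves on whose arc side a point lies are therefore exactly
the leaves enclosing one of `d` gaps: the outer gap, or the gap just inside some leaf. Each gap
is realized near the circle, which gives `d` components.

On the circle, the closure of the cell of a gap contains the arcs of that gap. Their total
length is the length of the enclosing leaf (or `1`) minus the lengths of the maximal leaves
inside it, a positive multiple of `1/d`. The `d` closures meet the circle in almost disjoint
sets, so their measures, each at least `1/d`, add up to at most `1`, and all equal `1/d`.
-/

open Set MeasureTheory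

/-- The circle `ℝ/ℤ`. -/
abbrev 𝕊 := AddCircle (1 : ℝ)

/-- A generic degree-`d` primitive major, encoded by the starting points `s i` and
terminal points `t i` of its `d - 1` leaves: all `2(d-1)` endpoints are pairwise
distinct, `0 ≤ s i < t i < 1`, each `d • (t i - s i)` is an integer, and any two leaves
are unlinked. -/
def IsGenericMajor (d : ℕ) (s t : Fin (d - 1) → ℝ) : Prop :=
  (∀ i, 0 ≤ s i ∧ s i < t i ∧ t i < 1) ∧
  Function.Injective (Sum.elim s t) ∧
  (∀ i, ∃ k : ℤ, (d : ℝ) * (t i - s i) = (k : ℝ)) ∧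
  ∀ i j, i ≠ j →
    ((s j ∈ Ioo (s i) (t i) ∧ t j ∈ Ioo (s i) (t i)) ∨
     (s j ∉ Icc (s i) (t i) ∧ t j ∉ Icc (s i) (t i)))

/-- The point `e^{2πiα}` of the unit circle in `ℂ` attached to `α ∈ ℝ/ℤ`. -/
noncomputable def circleExp (α : 𝕊) : ℂ := (AddCircle.toCircle α : ℂ)

open ComplexConjugate Real

section SignCell

variable {E ι : Type*} [NormedAddCommGroup E] [NormedSpace ℝ E]

def signCell (f : ι → E →ᵃ[ℝ] ℝ) (T : Set ι) : Set E :=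
  (⋂ i ∈ T, f i ⁻¹' Iio 0) ∩ ⋂ i ∈ Tᶜ, f i ⁻¹' Ioi 0

variable {f : ι → E →ᵃ[ℝ] ℝ} {T T' : Set ι} {z : E}

lemma mem_signCell : z ∈ signCell f T ↔ (∀ i ∈ T, f i z < 0) ∧ ∀ i ∉ T, 0 < f i z := by
  simp [signCell]

lemma convex_signCell : Convex ℝ (signCell f T) :=
  (convex_iInter₂ fun i _ => (convex_Iio 0).affine_preimage (f i)).inter
    (convex_iInter₂ fun i _ => (convex_Ioi 0).affine_preimage (f i))

lemma setOf_neg_eq_of_mem_signCell (hz : z ∈ signCell f T) : {i | f i z < 0} = T := by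
  rw [mem_signCell] at hz
  ext i
  by_cases hi : i ∈ T
  · simp [hi, hz.1 i hi]
  · simp [hi, (hz.2 i hi).le]

lemma mem_signCell_setOf_neg (hz : ∀ i, f i z ≠ 0) : z ∈ signCell f {i | f i z < 0} :=
  mem_signCell.2 ⟨fun _ => id, fun i hi => (not_lt.1 hi).lt_of_ne' (hz i)⟩

lemma ne_zero_of_mem_signCell (hz : z ∈ signCell f T) (i : ι) : f i z ≠ 0 := by
  rw [mem_signCell] at hz
  by_cases hi : i ∈ T
  · exact (hz.1 i hi).ne
  · exact (hz.2 i hi).ne'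

variable [FiniteDimensional ℝ E]

lemma isOpen_signCell [Finite ι] : IsOpen (signCell f T) :=
  have hf := fun i => (f i).continuous_of_finiteDimensional
  (T.toFinite.isOpen_biInter fun i _ => isOpen_Iio.preimage (hf i)).inter
    (Tᶜ.toFinite.isOpen_biInter fun i _ => isOpen_Ioi.preimage (hf i))

lemma mem_signCell_of_mem_closure (hz : z ∈ closure (signCell f T)) (h : ∀ i, f i z ≠ 0) :
    z ∈ signCell f T := by
  have hf := fun i => (f i).continuous_of_finiteDimensional
  have hweak : closure (signCell f T) ⊆ (⋂ i ∈ T, f i ⁻¹' Iic 0) ∩ ⋂ i ∈ Tᶜ, f i ⁻¹' Ici 0 :=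
    closure_minimal (inter_subset_inter
      (iInter₂_mono fun i _ => preimage_mono Iio_subset_Iic_self)
      (iInter₂_mono fun i _ => preimage_mono Ioi_subset_Ici_self))
    ((isClosed_biInter fun i _ => isClosed_Iic.preimage (hf i)).inter
      (isClosed_biInter fun i _ => isClosed_Ici.preimage (hf i)))
  have := hweak hz
  simp only [mem_inter_iff, mem_iInter₂, mem_preimage, mem_Iic, mem_Ici, mem_compl_iff] at this
  exact mem_signCell.2 ⟨fun i hi => (this.1 i hi).lt_of_ne (h i),
    fun i hi => (this.2 i hi).lt_of_ne' (h i)⟩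

lemma exists_eq_zero_of_mem_closure_inter_closure {Ω : Set E} (hT : T ≠ T')
    (hz : z ∈ closure (Ω ∩ signCell f T)) (hz' : z ∈ closure (Ω ∩ signCell f T')) :
    ∃ i, f i z = 0 := by
  by_contra! h
  have hcell : ∀ {T}, z ∈ closure (Ω ∩ signCell f T) → z ∈ signCell f T := fun hz =>
    mem_signCell_of_mem_closure (closure_mono inter_subset_right hz) h
  exact hT ((setOf_neg_eq_of_mem_signCell (hcell hz)).symm.trans
    (setOf_neg_eq_of_mem_signCell (hcell hz')))

lemma IsPreconnected.neg_iff_neg {X : Type*} [TopologicalSpace X] {S : Set X} {g : X → ℝ}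
    (hS : IsPreconnected S) (hg : ContinuousOn g S) (h0 : ∀ x ∈ S, g x ≠ 0) {a b : X}
    (ha : a ∈ S) (hb : b ∈ S) : g a < 0 ↔ g b < 0 := by
  have key : ∀ {a b}, a ∈ S → b ∈ S → g a < 0 → g b < 0 := fun ha hb hga => by
    by_contra! hgb
    obtain ⟨c, hc, hgc⟩ := hS.intermediate_value ha hb hg ⟨hga.le, hgb⟩
    exact h0 c hc hgc
  exact ⟨key ha hb, key hb ha⟩

lemma connectedComponentIn_eq_inter_signCell {Ω : Set E} (hΩ : Convex ℝ Ω)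
    (hz : z ∈ Ω \ ⋃ i, {w | f i w = 0}) :
    connectedComponentIn (Ω \ ⋃ i, {w | f i w = 0}) z = Ω ∩ signCell f {i | f i z < 0} := by
  set U := Ω \ ⋃ i, {w | f i w = 0}
  have hU : ∀ {w}, w ∈ U ↔ w ∈ Ω ∧ ∀ i, f i w ≠ 0 := by simp [U]
  apply Subset.antisymm
  · intro w hw
    have hwU := hU.1 (connectedComponentIn_subset U z hw)
    have hsign : {i | f i w < 0} = {i | f i z < 0} := by
      ext i
      exact (isPreconnected_connectedComponentIn.neg_iff_neg
        (f i).continuous_of_finiteDimensional.continuousOn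
        (fun x hx => (hU.1 (connectedComponentIn_subset U z hx)).2 i) hw
        (mem_connectedComponentIn hz))
    exact ⟨hwU.1, hsign ▸ mem_signCell_setOf_neg hwU.2⟩
  · refine (hΩ.inter convex_signCell).isPreconnected.subset_connectedComponentIn
      ⟨hz.1, mem_signCell_setOf_neg (hU.1 hz).2⟩ fun w hw => hU.2 ⟨hw.1, ?_⟩
    exact ne_zero_of_mem_signCell hw.2

lemma natCard_connectedComponentIn_eq {κ : Type*} {Ω : Set E} (hΩ : Convex ℝ Ω)
    {P : κ → Set ι} (hP : Function.Injective P) (hne : ∀ k, (Ω ∩ signCell f (P k)).Nonempty)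
    (hrange : ∀ z ∈ Ω \ ⋃ i, {w | f i w = 0}, ∃ k, {i | f i z < 0} = P k) :
    Nat.card {C : Set E // ∃ z ∈ Ω \ ⋃ i, {w | f i w = 0},
      C = connectedComponentIn (Ω \ ⋃ i, {w | f i w = 0}) z} = Nat.card κ := by
  have hcell : ∀ k, ∃ z ∈ Ω \ ⋃ i, {w | f i w = 0},
      Ω ∩ signCell f (P k) = connectedComponentIn (Ω \ ⋃ i, {w | f i w = 0}) z := fun k =>
    let ⟨z, hzΩ, hz⟩ := hne k
    have hzU : z ∈ Ω \ ⋃ i, {w | f i w = 0} := by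
      simpa [hzΩ] using ne_zero_of_mem_signCell hz
    ⟨z, hzU, by rw [connectedComponentIn_eq_inter_signCell hΩ hzU, setOf_neg_eq_of_mem_signCell hz]⟩
  refine (Nat.card_eq_of_bijective (fun k => ⟨_, hcell k⟩) ⟨fun k k' hkk' => hP ?_, ?_⟩).symm
  · obtain ⟨z, hzΩ, hz⟩ := hne k
    have heq : Ω ∩ signCell f (P k) = Ω ∩ signCell f (P k') := congrArg Subtype.val hkk'
    have hz' : z ∈ Ω ∩ signCell f (P k') := heq ▸ ⟨hzΩ, hz⟩
    exact (setOf_neg_eq_of_mem_signCell hz).symm.trans (setOf_neg_eq_of_mem_signCell hz'.2)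
  · rintro ⟨C, z, hz, hC⟩
    obtain ⟨k, hk⟩ := hrange z hz
    refine ⟨k, Subtype.ext (hC.trans ?_).symm⟩
    rw [connectedComponentIn_eq_inter_signCell hΩ hz, hk]

end SignCell

lemma exists_pos_norm_add_smul_eq_one {E : Type*} [NormedAddCommGroup E] [NormedSpace ℝ E]
    {z v : E} (hz : ‖z‖ < 1) (hv : v ≠ 0) : ∃ u : ℝ, 0 < u ∧ ‖z + u • v‖ = 1 := by
  have hv' : 0 < ‖v‖ := norm_pos_iff.2 hv
  have hfar : 1 ≤ ‖z + (2 / ‖v‖) • v‖ := by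
    have := norm_sub_norm_le ((2 / ‖v‖) • v) (-z)
    rw [norm_smul, norm_div, Real.norm_ofNat, norm_norm, div_mul_cancel₀ _ hv'.ne', norm_neg,
      sub_neg_eq_add, add_comm] at this
    linarith
  obtain ⟨u, hu, hu1⟩ := intermediate_value_Icc (by positivity)
    (by fun_prop : Continuous fun u : ℝ => ‖z + u • v‖).continuousOn
    ⟨by simpa using hz.le, hfar⟩
  refine ⟨u, hu.1.lt_of_ne ?_, hu1⟩
  rintro rfl
  simp only [zero_smul, add_zero] at hu1
  exact hz.ne hu1

lemma exists_norm_eq_one_mem_segment {E : Type*} [NormedAddCommGroup E] [NormedSpace ℝ E]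
    {z v : E} (hz : ‖z‖ < 1) (hv : v ≠ 0) :
    ∃ u₁ u₂ : ℝ, ‖z + u₁ • v‖ = 1 ∧ ‖z + u₂ • v‖ = 1 ∧
      z ∈ segment ℝ (z + u₁ • v) (z + u₂ • v) := by
  obtain ⟨u₁, hu₁, h₁⟩ := exists_pos_norm_add_smul_eq_one hz hv
  obtain ⟨u₂, hu₂, h₂⟩ := exists_pos_norm_add_smul_eq_one hz (neg_ne_zero.2 hv)
  refine ⟨u₁, -u₂, h₁, by rwa [neg_smul, ← smul_neg], u₂ / (u₁ + u₂), u₁ / (u₁ + u₂),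
    by positivity, by positivity, by field_simp; ring, ?_⟩
  match_scalars <;> field_simp <;> ring

noncomputable def lineSide (p q : ℂ) : ℂ →ᵃ[ℝ] ℝ where
  toFun z := ((z - p) * conj (q - p)).im
  linear := Complex.imLm ∘ₗ LinearMap.mulRight ℝ (conj (q - p))
  map_vadd' z v := by simp [add_sub_assoc, add_mul]

lemma lineSide_apply (p q z : ℂ) : lineSide p q z = ((z - p) * conj (q - p)).im := rfl

lemma lineSide_left (p q : ℂ) : lineSide p q p = 0 := by simp [lineSide_apply]

lemma lineSide_right (p q : ℂ) : lineSide p q q = 0 := by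
  simp only [lineSide_apply, Complex.mul_conj, Complex.ofReal_im]

lemma lineSide_add_smul_sub (p q z : ℂ) (u : ℝ) :
    lineSide p q (z + u • (q - p)) = lineSide p q z := by
  rw [lineSide_apply, lineSide_apply, add_sub_right_comm, add_mul, Complex.add_im,
    Complex.real_smul, mul_assoc, Complex.mul_conj, ← Complex.ofReal_mul, Complex.ofReal_im, add_zero]

lemma norm_circleExp (α : 𝕊) : ‖circleExp α‖ = 1 := Circle.norm_coe _

lemma continuous_circleExp : Continuous circleExp :=
  continuous_subtype_val.comp AddCircle.continuous_toCircle

lemma circleExp_injective : Function.Injective circleExp :=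
  Subtype.val_injective.comp (AddCircle.injective_toCircle one_ne_zero)

lemma exists_circleExp_eq {w : ℂ} (hw : ‖w‖ = 1) : ∃ α, circleExp α = w := by
  obtain ⟨α, hα⟩ := (AddCircle.homeomorphCircle (one_ne_zero' ℝ)).surjective
    ⟨w, by simpa [Submonoid.unitSphere] using hw⟩
  exact ⟨α, by rw [circleExp, ← AddCircle.homeomorphCircle_apply one_ne_zero, hα]⟩

lemma circleExp_coe_re (β : ℝ) : (circleExp β).re = cos (2 * π * β) := by
  rw [circleExp, AddCircle.toCircle_apply_mk, Circle.coe_exp, Complex.exp_ofReal_mul_I_re, div_one]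

lemma circleExp_coe_im (β : ℝ) : (circleExp β).im = sin (2 * π * β) := by
  rw [circleExp, AddCircle.toCircle_apply_mk, Circle.coe_exp, Complex.exp_ofReal_mul_I_im, div_one]

lemma lineSide_circleExp (s t β : ℝ) : lineSide (circleExp s) (circleExp t) (circleExp β) =
    4 * sin (π * (t - s)) * sin (π * (β - s)) * sin (π * (β - t)) := by
  set x := π * (β - s)
  set y := π * (t - s)
  have hβ : 2 * π * β = 2 * π * s + 2 * x := by ring
  have ht : 2 * π * t = 2 * π * s + 2 * y := by ring
  have hxy : π * (β - t) = x - y := by ring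
  simp only [lineSide_apply, Complex.mul_im, Complex.sub_re, Complex.sub_im, Complex.conj_re,
    Complex.conj_im, circleExp_coe_re, circleExp_coe_im, hβ, ht, hxy, sin_add, cos_add,
    sin_two_mul, cos_two_mul, sin_sub]
  linear_combination (2 * sin x * cos x * (2 * cos y ^ 2 - 2) - (2 * cos x ^ 2 - 2) *
    (2 * sin y * cos y)) * sin_sq_add_cos_sq (2 * π * s) + 4 * sin x * cos x * sin_sq_add_cos_sq y -
    4 * sin y * cos y * sin_sq_add_cos_sq x

section Chord

variable {s t : ℝ} (hst : s < t) (hts : t < s + 1)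
include hst hts

lemma sin_pi_mul_sub_pos : 0 < sin (π * (t - s)) :=
  sin_pos_of_pos_of_lt_pi (by nlinarith [pi_pos]) (by nlinarith [pi_pos])

lemma lineSide_circleExp_neg {β : ℝ} (hβ : β ∈ Ioo s t) :
    lineSide (circleExp s) (circleExp t) (circleExp β) < 0 := by
  rw [lineSide_circleExp]
  have h₁ : 0 < sin (π * (β - s)) :=
    sin_pos_of_pos_of_lt_pi (by nlinarith [pi_pos, hβ.1]) (by nlinarith [pi_pos, hβ.2])
  have h₂ : sin (π * (β - t)) < 0 :=
    sin_neg_of_neg_of_neg_pi_lt (by nlinarith [pi_pos, hβ.2]) (by nlinarith [pi_pos, hβ.1])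
  have := sin_pi_mul_sub_pos hst hts
  exact mul_neg_of_pos_of_neg (by positivity) h₂

lemma lineSide_circleExp_nonneg {β : ℝ} (hβ : β ∈ Icc t (s + 1)) :
    0 ≤ lineSide (circleExp s) (circleExp t) (circleExp β) := by
  rw [lineSide_circleExp]
  have h₁ : 0 ≤ sin (π * (β - s)) :=
    sin_nonneg_of_nonneg_of_le_pi (by nlinarith [pi_pos, hβ.1]) (by nlinarith [pi_pos, hβ.2])
  have h₂ : 0 ≤ sin (π * (β - t)) :=
    sin_nonneg_of_nonneg_of_le_pi (by nlinarith [pi_pos, hβ.1]) (by nlinarith [pi_pos, hβ.2])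
  have := sin_pi_mul_sub_pos hst hts
  positivity

lemma lineSide_circleExp_nonneg_of_notMem {β : ℝ} (hβ : β ∈ Icc (t - 1) (s + 1))
    (hβ' : β ∉ Ioo s t) : 0 ≤ lineSide (circleExp s) (circleExp t) (circleExp β) := by
  rcases le_or_gt t β with htβ | hβt
  · exact lineSide_circleExp_nonneg hst hts ⟨htβ, hβ.2⟩
  · have hβs : β ≤ s := not_lt.1 fun hsβ => hβ' ⟨hsβ, hβt⟩
    rw [← AddCircle.coe_add_period 1 β]
    exact lineSide_circleExp_nonneg hst hts ⟨by linarith [hβ.1], by linarith⟩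

lemma lineSide_circleExp_eq_zero_iff {α : 𝕊} :
    lineSide (circleExp s) (circleExp t) (circleExp α) = 0 ↔ α = s ∨ α = t := by
  refine ⟨fun h => ?_, ?_⟩
  · obtain ⟨β, rfl⟩ := QuotientAddGroup.mk_surjective α
    have hcoe : ∀ {γ}, sin (π * (β - γ)) = 0 → (β : 𝕊) = γ := fun h => by
      obtain ⟨k, hk⟩ := Real.sin_eq_zero_iff.1 h
      refine QuotientAddGroup.eq_iff_sub_mem.2 (AddSubgroup.mem_zmultiples_iff.2 ⟨k, ?_⟩)
      have := pi_pos
      simp only [zsmul_eq_mul, mul_one]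
      nlinarith
    rw [lineSide_circleExp, mul_eq_zero, mul_eq_zero] at h
    rcases h with (h | h) | h
    · exact absurd h (by have := sin_pi_mul_sub_pos hst hts; positivity)
    · exact Or.inl (hcoe h)
    · exact Or.inr (hcoe h)
  · rintro (rfl | rfl)
    exacts [lineSide_left _ _, lineSide_right _ _]

lemma circleExp_ne_circleExp : circleExp s ≠ circleExp t := fun h =>
  hst.ne ((AddCircle.coe_eq_coe_iff_of_mem_Ico (a := s) ⟨le_rfl, by linarith⟩
    ⟨hst.le, hts⟩).1 (circleExp_injective h))

/- The chord through `z` parallel to `pq` ends on the circle where `lineSide` vanishes, that is,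
at `p` and `q`. -/
lemma lineSide_eq_zero_iff_mem_segment {z : ℂ} (hz : ‖z‖ < 1) :
    lineSide (circleExp s) (circleExp t) z = 0 ↔ z ∈ segment ℝ (circleExp s) (circleExp t) := by
  set f := lineSide (circleExp s) (circleExp t)
  refine ⟨fun h => ?_, fun h => ((convex_singleton 0).affine_preimage f).segment_subset
    (lineSide_left _ _) (lineSide_right _ _) h⟩
  obtain ⟨u₁, u₂, h₁, h₂, hseg⟩ :=
    exists_norm_eq_one_mem_segment hz (sub_ne_zero.2 (circleExp_ne_circleExp hst hts).symm)
  have hend : ∀ {u : ℝ}, ‖z + u • (circleExp t - circleExp s)‖ = 1 →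
      z + u • (circleExp t - circleExp s) = circleExp s ∨
        z + u • (circleExp t - circleExp s) = circleExp t := fun hu => by
    obtain ⟨α, hα⟩ := exists_circleExp_eq hu
    have hα0 : f (circleExp α) = 0 := by rw [hα, lineSide_add_smul_sub, h]
    rcases (lineSide_circleExp_eq_zero_iff hst hts).1 hα0 with rfl | rfl
    exacts [Or.inl hα.symm, Or.inr hα.symm]
  have hne : z + u₁ • (circleExp t - circleExp s) ≠ z + u₂ • (circleExp t - circleExp s) :=
    fun he => by rw [he, segment_same, mem_singleton_iff] at hseg; rw [← hseg] at h₂; linarith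
  rcases hend h₁ with ha | ha <;> rcases hend h₂ with hb | hb <;> rw [ha, hb] at hseg hne
  · exact absurd rfl hne
  · exact hseg
  · rwa [segment_symm]
  · exact absurd rfl hne

lemma mem_convexHull_arc {z : ℂ} (hz : ‖z‖ < 1)
    (hneg : lineSide (circleExp s) (circleExp t) z < 0) :
    z ∈ convexHull ℝ ((fun β : ℝ => circleExp β) '' Ioo s t) := by
  set f := lineSide (circleExp s) (circleExp t)
  obtain ⟨u₁, u₂, h₁, h₂, hseg⟩ :=
    exists_norm_eq_one_mem_segment hz (sub_ne_zero.2 (circleExp_ne_circleExp hst hts).symm)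
  have harc : ∀ {u : ℝ}, ‖z + u • (circleExp t - circleExp s)‖ = 1 →
      z + u • (circleExp t - circleExp s) ∈ (fun β : ℝ => circleExp β) '' Ioo s t := fun hu => by
    obtain ⟨α, hα⟩ := exists_circleExp_eq hu
    have hneg' : f (circleExp α) < 0 := by rwa [hα, lineSide_add_smul_sub]
    obtain ⟨β, hβ, rfl⟩ : ∃ β ∈ Ico s (s + 1), (β : 𝕊) = α := by
      rw [← mem_image, AddCircle.coe_image_Ico_eq]; trivial
    refine ⟨β, ⟨hβ.1.lt_of_ne ?_, lt_of_not_ge fun htβ => ?_⟩, hα⟩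
    · rintro rfl; exact hneg'.ne (lineSide_left _ _)
    · exact (lineSide_circleExp_nonneg hst hts ⟨htβ, hβ.2.le⟩).not_gt hneg'
  exact segment_subset_convexHull (harc h₁) (harc h₂) hseg

end Chord

section Leaves

variable {n : ℕ} {s t : Fin n → ℝ}

def Unlinked (s t : Fin n → ℝ) : Prop :=
  ∀ i j, i ≠ j →
    ((s j ∈ Ioo (s i) (t i) ∧ t j ∈ Ioo (s i) (t i)) ∨
     (s j ∉ Icc (s i) (t i) ∧ t j ∉ Icc (s i) (t i)))

lemma Unlinked.trichotomy (hunl : Unlinked s t) {i j : Fin n} (hij : i ≠ j) :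
    (s i < s j ∧ t j < t i) ∨ (s j < s i ∧ t i < t j) ∨ t j < s i ∨ t i < s j := by
  rcases hunl i j hij with ⟨hs, ht⟩ | ⟨hs, ht⟩
  · exact Or.inl ⟨hs.1, ht.2⟩
  · simp only [mem_Icc, not_and_or, not_le] at hs ht
    rcases hs with hs | hs
    · rcases ht with ht | ht
      exacts [Or.inr (Or.inr (Or.inl ht)), Or.inr (Or.inl ⟨hs, ht⟩)]
    · exact Or.inr (Or.inr (Or.inr hs))

/- The gaps are indexed by `Option (Fin n)`: `none` is the outer gap, bounded by the whole circle
`(0, 1)`, and `some i` is the gap just inside leaf `i`. -/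
def gapLo (s : Fin n → ℝ) (o : Option (Fin n)) : ℝ := o.elim 0 s

def gapHi (t : Fin n → ℝ) (o : Option (Fin n)) : ℝ := o.elim 1 t

def enclosing (s t : Fin n → ℝ) (o : Option (Fin n)) : Set (Fin n) :=
  {j | s j ≤ gapLo s o ∧ gapHi t o ≤ t j}

lemma self_mem_enclosing (i : Fin n) : i ∈ enclosing s t (some i) := ⟨le_rfl, le_rfl⟩

lemma enclosing_none (ht : ∀ i, t i < 1) : enclosing s t none = ∅ :=
  eq_empty_of_forall_notMem fun j hj => (ht j).not_ge hj.2

lemma enclosing_injective (ht : ∀ i, t i < 1) (hinj : Function.Injective (Sum.elim s t)) :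
    Function.Injective (enclosing s t) := by
  have hsome : ∀ i o, enclosing s t (some i) = enclosing s t o → o = some i := fun i o h => by
    cases o with
    | none => exact absurd (h ▸ self_mem_enclosing i) (by simp [enclosing_none ht])
    | some j =>
      have hij : i ∈ enclosing s t (some j) := h ▸ self_mem_enclosing i
      have hji : j ∈ enclosing s t (some i) := h.symm ▸ self_mem_enclosing j
      exact congrArg some (Sum.inl_injective (hinj (le_antisymm hji.1 hij.1)))
  rintro (_ | i) o h
  · cases o with
    | none => rfl
    | some j => exact hsome j none h.symm
  · exact (hsome i o h).symm

lemma Unlinked.exists_enclosing_eq (hunl : Unlinked s t) (ht : ∀ i, t i < 1) {T : Set (Fin n)}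
    (hup : ∀ i ∈ T, ∀ j, s j ≤ s i → t i ≤ t j → j ∈ T)
    (hmeet : ∀ i ∈ T, ∀ j ∈ T, ¬ (t j < s i ∨ t i < s j)) :
    ∃ o, T = enclosing s t o := by
  rcases T.eq_empty_or_nonempty with rfl | hne
  · exact ⟨none, (enclosing_none ht).symm⟩
  obtain ⟨i, hi, hmin⟩ := T.exists_min_image (fun i => t i - s i) T.toFinite hne
  refine ⟨some i, Subset.antisymm (fun j hj => ?_) fun j hj => hup i hi j hj.1 hj.2⟩
  rcases eq_or_ne i j with rfl | hij
  · exact self_mem_enclosing i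
  rcases hunl.trichotomy hij with h | h | h
  · linarith [hmin j hj]
  · exact ⟨h.1.le, h.2.le⟩
  · exact absurd h (hmeet i hi j hj)

/- `≤` on the left since a leaf may start at `0`; `<` on the right excludes the leaf bounding the
gap itself. -/
def Nested (s t : Fin n → ℝ) (o : Option (Fin n)) (k : Fin n) : Prop :=
  gapLo s o ≤ s k ∧ t k < gapHi t o

open Classical in
noncomputable def children (s t : Fin n → ℝ) (o : Option (Fin n)) : Finset (Fin n) :=
  {k | Nested s t o k ∧ ∀ l, Nested s t o l → ¬ (s l < s k ∧ t k < t l)}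

lemma mem_children {o : Option (Fin n)} {k : Fin n} :
    k ∈ children s t o ↔ Nested s t o k ∧ ∀ l, Nested s t o l → ¬ (s l < s k ∧ t k < t l) := by
  simp [children]

lemma exists_mem_children {o : Option (Fin n)} {j : Fin n} (hj : Nested s t o j) :
    ∃ k ∈ children s t o, s k ≤ s j ∧ t j ≤ t k := by
  set S := {k | Nested s t o k ∧ s k ≤ s j ∧ t j ≤ t k}
  obtain ⟨k, hk, hmax⟩ := S.exists_max_image (fun k => t k - s k) S.toFinite
    ⟨j, hj, le_rfl, le_rfl⟩
  refine ⟨k, mem_children.2 ⟨hk.1, fun l hl hlk => ?_⟩, hk.2⟩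
  have := hmax l ⟨hl, hlk.1.le.trans hk.2.1, hk.2.2.trans hlk.2.le⟩
  linarith [hlk.1, hlk.2]

lemma Unlinked.pairwiseDisjoint_children (hunl : Unlinked s t) (o : Option (Fin n)) :
    (children s t o : Set (Fin n)).PairwiseDisjoint fun k => Ioo (s k) (t k) := by
  intro k hk l hl hkl
  rw [Finset.mem_coe, mem_children] at hk hl
  rcases hunl.trichotomy hkl with h | h | h | h
  · exact absurd h (hl.2 k hk.1)
  · exact absurd h (hk.2 l hl.1)
  all_goals exact disjoint_left.2 fun x hxk hxl => by linarith [hxk.1, hxk.2, hxl.1, hxl.2]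

lemma Unlinked.mem_enclosing_or_nested (hunl : Unlinked s t)
    (hbd : ∀ i, 0 ≤ s i ∧ s i < t i ∧ t i < 1)
    (o : Option (Fin n)) (j : Fin n) :
    j ∈ enclosing s t o ∨ Nested s t o j ∨ t j ≤ gapLo s o ∨ gapHi t o ≤ s j := by
  cases o with
  | none => exact Or.inr (Or.inl ⟨(hbd j).1, (hbd j).2.2⟩)
  | some i =>
    rcases eq_or_ne i j with rfl | hij
    · exact Or.inl (self_mem_enclosing i)
    rcases hunl.trichotomy hij with h | h | h | h
    · exact Or.inr (Or.inl ⟨h.1.le, h.2⟩)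
    · exact Or.inl ⟨h.1.le, h.2.le⟩
    · exact Or.inr (Or.inr (Or.inl h.le))
    · exact Or.inr (Or.inr (Or.inr h.le))

def gap (s t : Fin n → ℝ) (o : Option (Fin n)) : Set ℝ :=
  Ioo (gapLo s o) (gapHi t o) \ ⋃ k ∈ children s t o, Ioo (s k) (t k)

lemma gap_subset_Ioo (hbd : ∀ i, 0 ≤ s i ∧ s i < t i ∧ t i < 1) (o : Option (Fin n)) :
    gap s t o ⊆ Ioo 0 1 := by
  refine sdiff_subset.trans (Ioo_subset_Ioo ?_ ?_)
  · cases o with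
    | none => exact le_rfl
    | some i => exact (hbd i).1
  · cases o with
    | none => exact le_rfl
    | some i => exact (hbd i).2.2.le

lemma Unlinked.mem_Ioo_iff_mem_enclosing (hunl : Unlinked s t)
    (hbd : ∀ i, 0 ≤ s i ∧ s i < t i ∧ t i < 1) {o : Option (Fin n)} {β : ℝ}
    (hβ : β ∈ gap s t o) (j : Fin n) : β ∈ Ioo (s j) (t j) ↔ j ∈ enclosing s t o := by
  obtain ⟨⟨hlo, hhi⟩, hout⟩ := hβ
  refine ⟨fun hj => ?_, fun hj => ⟨(hj.1 : s j ≤ _).trans_lt hlo, hhi.trans_le hj.2⟩⟩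
  rcases hunl.mem_enclosing_or_nested hbd o j with h | h | h | h
  · exact h
  · obtain ⟨k, hk, hks, hkt⟩ := exists_mem_children h
    exact absurd (mem_biUnion (Finset.mem_coe.2 hk) (⟨hks.trans_lt hj.1, hj.2.trans_le hkt⟩ :
      β ∈ Ioo (s k) (t k))) hout
  · linarith [hj.2]
  · linarith [hj.1]

end Leaves

section Measure

instance {T : ℝ} [Fact (0 < T)] : NullSingletonClass (volume : Measure (AddCircle T)) :=
  ⟨fun α => by
    rw [← Metric.closedBall_zero, AddCircle.volume_closedBall, mul_zero,
      min_eq_right (Fact.out : 0 < T).le, ENNReal.ofReal_zero]⟩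

variable {ι : Type*} {M : Finset ι} {a b : ℝ} {l r : ι → ℝ}

lemma volume_biUnion_Ioo (hlr : ∀ j ∈ M, l j ≤ r j)
    (hdisj : (M : Set ι).PairwiseDisjoint fun j => Ioo (l j) (r j)) :
    volume (⋃ j ∈ M, Ioo (l j) (r j)) = ENNReal.ofReal (∑ j ∈ M, (r j - l j)) := by
  rw [measure_biUnion_finset hdisj fun _ _ => measurableSet_Ioo,
    ENNReal.ofReal_sum_of_nonneg fun j hj => sub_nonneg.2 (hlr j hj)]
  exact Finset.sum_congr rfl fun _ _ => Real.volume_Ioo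

lemma volume_Ioo_diff_biUnion_Ioo (hM : ∀ j ∈ M, a ≤ l j ∧ l j ≤ r j ∧ r j ≤ b)
    (hdisj : (M : Set ι).PairwiseDisjoint fun j => Ioo (l j) (r j)) :
    volume (Ioo a b \ ⋃ j ∈ M, Ioo (l j) (r j)) =
      ENNReal.ofReal (b - a - ∑ j ∈ M, (r j - l j)) := by
  have hunion := volume_biUnion_Ioo (fun j hj => (hM j hj).2.1) hdisj
  rw [measure_sdiff (iUnion₂_subset fun j hj => Ioo_subset_Ioo (hM j hj).1 (hM j hj).2.2)
    (M.measurableSet_biUnion fun _ _ => measurableSet_Ioo).nullMeasurableSet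
    (hunion ▸ ENNReal.ofReal_ne_top), hunion, Real.volume_Ioo,
    ← ENNReal.ofReal_sub _ (Finset.sum_nonneg fun j hj => sub_nonneg.2 (hM j hj).2.1)]

lemma sum_sub_lt_sub_of_pairwiseDisjoint (hab : a < b)
    (hM : ∀ j ∈ M, a ≤ l j ∧ l j ≤ r j ∧ r j < b)
    (hdisj : (M : Set ι).PairwiseDisjoint fun j => Ioo (l j) (r j)) :
    ∑ j ∈ M, (r j - l j) < b - a := by
  set c := (insert a (M.image r)).max' (Finset.insert_nonempty _ _)
  have hac : a ≤ c := Finset.le_max' _ _ (Finset.mem_insert_self _ _)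
  have hcb : c < b := (Finset.max'_lt_iff _ _).2 fun x hx => by
    rcases Finset.mem_insert.1 hx with rfl | hx
    · exact hab
    · obtain ⟨j, hj, rfl⟩ := Finset.mem_image.1 hx
      exact (hM j hj).2.2
  have hsub : ⋃ j ∈ M, Ioo (l j) (r j) ⊆ Ioo a c := iUnion₂_subset fun j hj =>
    Ioo_subset_Ioo (hM j hj).1
      (Finset.le_max' _ _ (Finset.mem_insert_of_mem (Finset.mem_image_of_mem r hj)))
  have hle := measure_mono (μ := volume) hsub
  rw [volume_biUnion_Ioo (fun j hj => (hM j hj).2.1) hdisj, Real.volume_Ioo,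
    ENNReal.ofReal_le_ofReal_iff (sub_nonneg.2 hac)] at hle
  linarith

lemma one_div_le_ofReal_of_mul_eq_intCast {d : ℕ} {x : ℝ} (hd : 0 < d) (hx : 0 < x) {k : ℤ}
    (hk : d * x = k) : 1 / (d : ENNReal) ≤ ENNReal.ofReal x := by
  have hk1 : (1 : ℝ) ≤ k := by
    exact_mod_cast (show (0 : ℤ) < k by exact_mod_cast hk ▸ (by positivity : (0 : ℝ) < d * x))
  have hle : 1 / (d : ℝ) ≤ x := by
    rw [div_le_iff₀ (by positivity), mul_comm, hk]
    exact hk1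
  calc 1 / (d : ENNReal) = ENNReal.ofReal (1 / d) := by
        rw [ENNReal.ofReal_div_of_pos (by positivity), ENNReal.ofReal_one, ENNReal.ofReal_natCast]
    _ ≤ ENNReal.ofReal x := ENNReal.ofReal_le_ofReal hle

lemma volume_le_volume_of_subset_preimage {W : Set ℝ} {A : Set 𝕊} (hA : NullMeasurableSet A)
    (hW : W ⊆ Ioc 0 1) (hWA : W ⊆ (↑) ⁻¹' A) : volume W ≤ volume A := by
  have hmp := AddCircle.measurePreserving_mk 1 0
  rw [zero_add] at hmp
  calc volume W = volume.restrict (Ioc 0 1) W := (Measure.restrict_eq_self _ hW).symm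
    _ ≤ volume.restrict (Ioc 0 1) ((↑) ⁻¹' A) := measure_mono hWA
    _ = volume A := hmp.measure_preimage hA

lemma ENNReal.eq_of_sum_le_card_mul {κ : Type*} [Fintype κ] {x : κ → ENNReal} {c : ENNReal}
    (hc : c ≠ ⊤) (hsum : ∑ k, x k ≤ Fintype.card κ * c) (hle : ∀ k, c ≤ x k) (k : κ) :
    x k = c := by
  classical
  refine (hle k).antisymm' (not_lt.1 fun hlt => hsum.not_gt ?_)
  rw [← Finset.card_univ, ← nsmul_eq_mul, ← Finset.sum_const,
    ← Finset.add_sum_erase _ _ (Finset.mem_univ k), ← Finset.add_sum_erase _ _ (Finset.mem_univ k)]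
  exact ENNReal.add_lt_add_of_lt_of_le (ENNReal.sum_ne_top.2 fun _ _ => hc) hlt
    (Finset.sum_le_sum fun j _ => hle j)

end Measure

section Major


variable {n : ℕ} {s t : Fin n → ℝ}

noncomputable def leafSide (s t : Fin n → ℝ) (i : Fin n) : ℂ →ᵃ[ℝ] ℝ :=
  lineSide (circleExp (s i)) (circleExp (t i))

def gapCell (s t : Fin n → ℝ) (o : Option (Fin n)) : Set ℂ :=
  Metric.ball 0 1 ∩ signCell (leafSide s t) (enclosing s t o)

variable (hbd : ∀ i, 0 ≤ s i ∧ s i < t i ∧ t i < 1)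
include hbd

lemma ball_diff_leaves_eq :
    Metric.ball (0 : ℂ) 1 \ ⋃ i, segment ℝ (circleExp (s i)) (circleExp (t i)) =
      Metric.ball 0 1 \ ⋃ i, {z | leafSide s t i z = 0} := by
  ext z
  simp only [mem_sdiff, mem_ball_zero_iff, mem_iUnion, mem_ofPred_eq, and_congr_right_iff,
    not_exists]
  exact fun hz => forall_congr' fun i => not_congr
    (lineSide_eq_zero_iff_mem_segment (hbd i).2.1 (by linarith [hbd i]) hz).symm

lemma leafSide_circleExp_neg {j : Fin n} {β : ℝ} (hβ : β ∈ Ioo (s j) (t j)) :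
    leafSide s t j (circleExp β) < 0 :=
  lineSide_circleExp_neg (hbd j).2.1 (by linarith [hbd j]) hβ

lemma leafSide_circleExp_nonneg {j : Fin n} {β : ℝ} (hβ : β ∈ Ioo 0 1)
    (hβ' : β ∉ Ioo (s j) (t j)) : 0 ≤ leafSide s t j (circleExp β) :=
  lineSide_circleExp_nonneg_of_notMem (hbd j).2.1 (by linarith [hbd j])
    ⟨by linarith [hbd j, hβ.1], by linarith [hbd j, hβ.2]⟩ hβ'

lemma Unlinked.exists_enclosing_eq_setOf_neg (hunl : Unlinked s t) {z : ℂ} (hz : ‖z‖ < 1) :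
    ∃ o, {i | leafSide s t i z < 0} = enclosing s t o := by
  have hhull : ∀ {i}, leafSide s t i z < 0 →
      z ∈ convexHull ℝ ((fun β : ℝ => circleExp β) '' Ioo (s i) (t i)) := fun hi =>
    mem_convexHull_arc (hbd _).2.1 (by linarith [hbd ‹_›]) hz hi
  refine hunl.exists_enclosing_eq (fun i => (hbd i).2.2) (fun i hi j hsj htj => ?_)
    fun i hi j hj hdisj => ?_
  · refine convexHull_min (image_subset_iff.2 fun β hβ => ?_)
      ((convex_Iio 0).affine_preimage (leafSide s t j)) (hhull hi)
    exact leafSide_circleExp_neg hbd ⟨hsj.trans_lt hβ.1, hβ.2.trans_le htj⟩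
  · have hj' : leafSide s t j z < 0 := hj
    refine hj'.not_ge (convexHull_min (image_subset_iff.2 fun β hβ => ?_)
      ((convex_Ici 0).affine_preimage (leafSide s t j)) (hhull hi))
    refine leafSide_circleExp_nonneg hbd
      ⟨(hbd i).1.trans_lt hβ.1, hβ.2.trans (hbd i).2.2⟩ fun hβj => ?_
    rcases hdisj with h | h
    · linarith [hβ.1, hβj.2]
    · linarith [hβ.2, hβj.1]

lemma Unlinked.circleExp_mem_closure_gapCell (hunl : Unlinked s t) {o : Option (Fin n)} {β : ℝ}
    (hβ : β ∈ gap s t o) (h0 : ∀ i, leafSide s t i (circleExp β) ≠ 0) :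
    circleExp β ∈ closure (gapCell s t o) := by
  have hcell : circleExp β ∈ signCell (leafSide s t) (enclosing s t o) := by
    refine mem_signCell.2 ⟨fun j hj => leafSide_circleExp_neg hbd
      ((hunl.mem_Ioo_iff_mem_enclosing hbd hβ j).2 hj), fun j hj => ?_⟩
    exact (leafSide_circleExp_nonneg hbd (gap_subset_Ioo hbd o hβ)
      (mt (hunl.mem_Ioo_iff_mem_enclosing hbd hβ j).1 hj)).lt_of_ne' (h0 j)
  have hball : circleExp β ∈ closure (Metric.ball (0 : ℂ) 1) := by
    rw [closure_ball 0 one_ne_zero, mem_closedBall_zero_iff, norm_circleExp]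
  rw [gapCell, inter_comm]
  exact isOpen_signCell.inter_closure ⟨hcell, hball⟩

lemma volume_setOf_leafSide_eq_zero :
    volume {α : 𝕊 | ∃ i, leafSide s t i (circleExp α) = 0} = 0 := by
  refine measure_mono_null (t := ⋃ i, {(s i : 𝕊), (t i : 𝕊)}) (fun α ⟨i, hi⟩ => ?_)
    ((finite_iUnion fun i => (finite_singleton _).insert _).measure_zero _)
  exact mem_iUnion.2 ⟨i, (lineSide_circleExp_eq_zero_iff (hbd i).2.1 (by linarith [hbd i])).1 hi⟩

lemma Unlinked.one_div_le_volume_gap (hunl : Unlinked s t) {d : ℕ} (hd : 0 < d)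
    (hint : ∀ i, ∃ k : ℤ, (d : ℝ) * (t i - s i) = (k : ℝ)) (o : Option (Fin n)) :
    1 / (d : ENNReal) ≤ volume (gap s t o) := by
  have hM : ∀ k ∈ children s t o, gapLo s o ≤ s k ∧ s k ≤ t k ∧ t k < gapHi t o := fun k hk =>
    have hk := (mem_children.1 hk).1
    ⟨hk.1, (hbd k).2.1.le, hk.2⟩
  have hlohi : gapLo s o < gapHi t o := by
    cases o with
    | none => exact zero_lt_one
    | some i => exact (hbd i).2.1
  have hdisj := hunl.pairwiseDisjoint_children o
  rw [gap, volume_Ioo_diff_biUnion_Ioo (fun k hk => ⟨(hM k hk).1, (hM k hk).2.1, (hM k hk).2.2.le⟩)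
    hdisj]
  have hpos := sub_pos.2 (sum_sub_lt_sub_of_pairwiseDisjoint hlohi hM hdisj)
  choose K hK using hint
  obtain ⟨k₀, hk₀⟩ : ∃ k : ℤ, (d : ℝ) * (gapHi t o - gapLo s o) = k := by
    cases o with
    | none => exact ⟨d, by simp [gapHi, gapLo]⟩
    | some i => exact ⟨K i, hK i⟩
  refine one_div_le_ofReal_of_mul_eq_intCast hd hpos (k := k₀ - ∑ k ∈ children s t o, K k) ?_
  rw [mul_sub, Finset.mul_sum, hk₀, Int.cast_sub, Int.cast_sum]
  simp only [hK]

lemma Unlinked.volume_gap_le (hunl : Unlinked s t) (o : Option (Fin n)) :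
    volume (gap s t o) ≤ volume {α : 𝕊 | circleExp α ∈ closure (gapCell s t o)} := by
  set Z := {α : 𝕊 | ∃ i, leafSide s t i (circleExp α) = 0}
  have hZ : volume Z = 0 := volume_setOf_leafSide_eq_zero hbd
  have hA : MeasurableSet {α : 𝕊 | circleExp α ∈ closure (gapCell s t o)} :=
    (isClosed_closure.preimage continuous_circleExp).measurableSet
  calc volume (gap s t o)
      ≤ volume ({α : 𝕊 | circleExp α ∈ closure (gapCell s t o)} ∪ Z) := by
        refine volume_le_volume_of_subset_preimage (hA.nullMeasurableSet.union
          (NullMeasurableSet.of_null hZ)) ((gap_subset_Ioo hbd o).trans Ioo_subset_Ioc_self)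
          fun β hβ => ?_
        by_cases h0 : (β : 𝕊) ∈ Z
        · exact Or.inr h0
        · exact Or.inl (hunl.circleExp_mem_closure_gapCell hbd hβ fun i hi => h0 ⟨i, hi⟩)
    _ ≤ _ := (measure_union_le _ _).trans_eq (by rw [hZ, add_zero])

lemma Unlinked.nonempty_gapCell (hunl : Unlinked s t) {d : ℕ} (hd : 0 < d)
    (hint : ∀ i, ∃ k : ℤ, (d : ℝ) * (t i - s i) = (k : ℝ)) (o : Option (Fin n)) :
    (gapCell s t o).Nonempty := by
  have hle := (hunl.one_div_le_volume_gap hbd hd hint o).trans (hunl.volume_gap_le hbd o)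
  refine nonempty_iff_ne_empty.2 fun h => ?_
  simp only [h, closure_empty, mem_empty_iff_false, ofPred_false, measure_empty, one_div,
    nonpos_iff_eq_zero] at hle
  exact ENNReal.inv_ne_zero.2 (ENNReal.natCast_ne_top d) hle

lemma Unlinked.volume_closure_gapCell (hunl : Unlinked s t)
    (hinj : Function.Injective (Sum.elim s t)) {d : ℕ} (hd : n + 1 = d)
    (hint : ∀ i, ∃ k : ℤ, (d : ℝ) * (t i - s i) = (k : ℝ)) (o : Option (Fin n)) :
    volume {α : 𝕊 | circleExp α ∈ closure (gapCell s t o)} = 1 / (d : ENNReal) := by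
  set A := fun o => {α : 𝕊 | circleExp α ∈ closure (gapCell s t o)}
  have hA : ∀ o, MeasurableSet (A o) := fun o =>
    (isClosed_closure.preimage continuous_circleExp).measurableSet
  have hdisj : Pairwise (Function.onFun (AEDisjoint volume) A) := fun o o' hoo' =>
    measure_mono_null (fun α hα => exists_eq_zero_of_mem_closure_inter_closure
      ((enclosing_injective (fun i => (hbd i).2.2) hinj).ne hoo') hα.1 hα.2)
      (volume_setOf_leafSide_eq_zero hbd)
  have hsum : ∑ o, volume (A o) ≤ Fintype.card (Option (Fin n)) * (1 / (d : ENNReal)) := by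
    rw [← measure_biUnion_finset₀ (hdisj.set_pairwise _) fun o _ => (hA o).nullMeasurableSet,
      Fintype.card_option, Fintype.card_fin, hd,
      one_div, ENNReal.mul_inv_cancel (by simp; omega) (ENNReal.natCast_ne_top d)]
    exact (measure_mono (subset_univ _)).trans_eq (by simp)
  exact ENNReal.eq_of_sum_le_card_mul (by simp; omega) hsum
    (fun o => (hunl.one_div_le_volume_gap hbd (by omega) hint o).trans
      (hunl.volume_gap_le hbd o)) o

end Major

/-- For a generic degree-`d` primitive major, the open unit disk minus
the `d - 1` leaves (straight chords joining `e^{2πi sᵢ}` to `e^{2πi tᵢ}`) has exactly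
`d` connected components, and for each component `C` the Haar (Lebesgue) measure on
`ℝ/ℤ` of the set of angles `α` with `e^{2πiα} ∈ closure C` equals `1/d`. -/
theorem disk_minus_major_components (d : ℕ) (hd : 2 ≤ d)
    (s t : Fin (d - 1) → ℝ) (hmajor : IsGenericMajor d s t)
    (U : Set ℂ)
    (hU : U = Metric.ball (0 : ℂ) 1 \
        ⋃ i, segment ℝ (circleExp ((s i : ℝ) : 𝕊)) (circleExp ((t i : ℝ) : 𝕊))) :
    Nat.card {C : Set ℂ // ∃ z ∈ U, C = connectedComponentIn U z} = d ∧
    ∀ z ∈ U,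
      volume {α : 𝕊 | circleExp α ∈ closure (connectedComponentIn U z)} =
        1 / (d : ENNReal) := by
  obtain ⟨hbd, hinj, hint, hunl : Unlinked s t⟩ := hmajor
  have hdn : d - 1 + 1 = d := by omega
  rw [ball_diff_leaves_eq hbd] at hU
  subst hU
  have hsign : ∀ z ∈ Metric.ball (0 : ℂ) 1 \ ⋃ i, {w | leafSide s t i w = 0},
      ∃ o, {i | leafSide s t i z < 0} = enclosing s t o := fun z hz =>
    hunl.exists_enclosing_eq_setOf_neg hbd (mem_ball_zero_iff.1 hz.1)
  refine ⟨?_, fun z hz => ?_⟩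
  · rw [natCard_connectedComponentIn_eq (convex_ball 0 1)
      (enclosing_injective (fun i => (hbd i).2.2) hinj)
      (hunl.nonempty_gapCell hbd (by omega) hint) hsign,
      Nat.card_eq_fintype_card, Fintype.card_option, Fintype.card_fin, hdn]
  · obtain ⟨o, ho⟩ := hsign z hz
    rw [connectedComponentIn_eq_inter_signCell (convex_ball 0 1) hz, ho]
    exact hunl.volume_closure_gapCell hbd hinj hdn hint o
end

section
/- Let d ≥ 2 and let (s_i, t_i)_{i=1}^{d−1} encode a generic degree-d primitive major with starting points ordered so that s_1 < s_2 < ⋯ < s_{d−1}. Then s_{d−1} < (d−1)/d and t_{d−1} = s_{d−1} + 1/d. -/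
open Set

namespace LastLeafAux

variable {n : ℕ} {s t : Fin (n + 1) → ℝ}

lemma s_inj (h : IsGenericMajor (n + 2) s t) : Function.Injective s := by
  intro i j hij
  have h2 : (Sum.inl i : Fin (n + 1) ⊕ Fin (n + 1)) = Sum.inl j := h.2.1 hij
  exact Sum.inl.inj h2

lemma split_cases (h : IsGenericMajor (n + 2) s t) {m j : Fin (n + 1)}
    (hjm : m ≠ j) (hs : s m < s j) :
    (s j < t j ∧ t j < t m) ∨ t m < s j := by
  rcases h.2.2.2 m j hjm with ⟨h1, h2⟩ | ⟨h1, h2⟩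
  · exact Or.inl ⟨(h.1 j).2.1, h2.2⟩
  · right
    simp only [Set.mem_Icc, not_and, not_le] at h1
    exact h1 hs.le

/-- Counting lemma: `N` unlinked leaves contained in `[a, b)` satisfy `N < d (b - a)`. -/
lemma count_plain (h : IsGenericMajor (n + 2) s t) :
    ∀ N : ℕ, ∀ F : Finset (Fin (n + 1)), F.card ≤ N → F.Nonempty →
    ∀ a b : ℝ, (∀ i ∈ F, a ≤ s i ∧ t i < b) →
    (F.card : ℝ) < ((n : ℝ) + 2) * (b - a) := by
  intro N
  induction N with
  | zero =>
    intro F hc hne a b _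
    rw [Nat.le_zero] at hc
    exact absurd (Finset.card_eq_zero.mp hc) hne.ne_empty
  | succ N ih =>
    intro F hc hne a b hab
    classical
    obtain ⟨m, hmF, hmin⟩ := F.exists_min_image s hne
    have hmin' : ∀ j ∈ F, j ≠ m → s m < s j := fun j hj hjm =>
      (hmin j hj).lt_of_ne fun he => hjm (s_inj h he.symm)
    obtain ⟨km, hkm⟩ := h.2.2.1 m
    have hkm' : ((n : ℝ) + 2) * (t m - s m) = km := by push_cast at hkm ⊢; linarith
    have hd : (0 : ℝ) < (n : ℝ) + 2 := by positivity
    have hms : s m < t m := (h.1 m).2.1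
    have hkm0 : (0 : ℤ) < km := by
      have h0 : (0 : ℝ) < (km : ℝ) := by nlinarith
      exact_mod_cast h0
    set FI := (F.erase m).filter (fun j => t j < t m) with hFIdef
    set FR := (F.erase m).filter (fun j => ¬ t j < t m) with hFRdef
    have hsplit : ∀ j ∈ F.erase m, (s m < s j ∧ s j < t j ∧ t j < t m) ∨ t m < s j := by
      intro j hj
      obtain ⟨hjm, hjF⟩ := Finset.mem_erase.mp hj
      have hs := hmin' j hjF hjm
      rcases split_cases h (Ne.symm hjm) hs with ⟨h1, h2⟩ | h1
      · exact Or.inl ⟨hs, h1, h2⟩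
      · exact Or.inr h1
    have hFIprop : ∀ j ∈ FI, s m ≤ s j ∧ t j < t m := by
      intro j hj
      obtain ⟨hje, hjt⟩ := Finset.mem_filter.mp hj
      rcases hsplit j hje with ⟨h1, _, h3⟩ | h1
      · exact ⟨h1.le, h3⟩
      · have := (h.1 j).2.1
        exact absurd hjt (by push_neg; linarith)
    have hFRprop : ∀ j ∈ FR, t m < s j := by
      intro j hj
      obtain ⟨hje, hjt⟩ := Finset.mem_filter.mp hj
      rcases hsplit j hje with ⟨_, _, h3⟩ | h1
      · exact absurd h3 hjt
      · exact h1
    have hcardsplit : FI.card + FR.card = (F.erase m).card :=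
      Finset.card_filter_add_card_filter_not _
    have herase : (F.erase m).card = F.card - 1 := Finset.card_erase_of_mem hmF
    have hF1 : 1 ≤ F.card := Finset.card_pos.mpr hne
    have hFcard : F.card = FI.card + FR.card + 1 := by omega
    have hFIcard : (FI.card : ℝ) ≤ (km : ℝ) - 1 := by
      rcases FI.eq_empty_or_nonempty with he | hne'
      · rw [he]
        have h1 : (1 : ℝ) ≤ (km : ℝ) := by exact_mod_cast hkm0
        simp
        linarith
      · have hle : FI.card ≤ N := by omega
        have hlt := ih FI hle hne' (s m) (t m) (fun i hi => hFIprop i hi)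
        rw [hkm'] at hlt
        have hlt' : (FI.card : ℤ) < km := by exact_mod_cast hlt
        have hle' : (FI.card : ℤ) ≤ km - 1 := by omega
        calc (FI.card : ℝ) = (((FI.card : ℤ)) : ℝ) := by push_cast; ring
          _ ≤ ((km - 1 : ℤ) : ℝ) := by exact_mod_cast hle'
          _ = (km : ℝ) - 1 := by push_cast; ring
    have htmb : t m < b := (hab m hmF).2
    have hFRcard : (FR.card : ℝ) < ((n : ℝ) + 2) * (b - t m) := by
      rcases FR.eq_empty_or_nonempty with he | hne'
      · rw [he]; simp; nlinarith
      · have hle : FR.card ≤ N := by omega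
        refine ih FR hle hne' (t m) b (fun i hi => ?_)
        have hiF : i ∈ F := (Finset.mem_erase.mp (Finset.mem_filter.mp hi).1).2
        exact ⟨(hFRprop i hi).le, (hab i hiF).2⟩
    have hma : a ≤ s m := (hab m hmF).1
    have hcast : (F.card : ℝ) = (FI.card : ℝ) + (FR.card : ℝ) + 1 := by
      exact_mod_cast hFcard
    rw [hcast]
    have hmul : ((n : ℝ) + 2) * (b - s m) ≤ ((n : ℝ) + 2) * (b - a) :=
      mul_le_mul_of_nonneg_left (by linarith) (by positivity)
    have hsum : ((n : ℝ) + 2) * (t m - s m) + ((n : ℝ) + 2) * (b - t m)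
        = ((n : ℝ) + 2) * (b - s m) := by ring
    linarith

/-- Refined counting lemma: if moreover `F` contains a marked leaf `p` which contains
no other leaf of `F`, then `N + (d(t p - s p) - 1) < d (b - a)`. -/
lemma count_marked (h : IsGenericMajor (n + 2) s t) :
    ∀ N : ℕ, ∀ F : Finset (Fin (n + 1)), F.card ≤ N →
    ∀ p, p ∈ F → (∀ j ∈ F, j ≠ p → ¬ (s p < s j ∧ t j < t p)) →
    ∀ a b : ℝ, (∀ i ∈ F, a ≤ s i ∧ t i < b) →
    (F.card : ℝ) + (((n : ℝ) + 2) * (t p - s p) - 1) < ((n : ℝ) + 2) * (b - a) := by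
  intro N
  induction N with
  | zero =>
    intro F hc p hp _ a b _
    rw [Nat.le_zero, Finset.card_eq_zero] at hc
    rw [hc] at hp
    exact absurd hp (Finset.notMem_empty p)
  | succ N ih =>
    intro F hc p hpF hnoin a b hab
    classical
    have hne : F.Nonempty := ⟨p, hpF⟩
    obtain ⟨m, hmF, hmin⟩ := F.exists_min_image s hne
    have hmin' : ∀ j ∈ F, j ≠ m → s m < s j := fun j hj hjm =>
      (hmin j hj).lt_of_ne fun he => hjm (s_inj h he.symm)
    obtain ⟨km, hkm⟩ := h.2.2.1 m
    have hkm' : ((n : ℝ) + 2) * (t m - s m) = km := by push_cast at hkm ⊢; linarith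
    obtain ⟨kp, hkp⟩ := h.2.2.1 p
    have hkp' : ((n : ℝ) + 2) * (t p - s p) = kp := by push_cast at hkp ⊢; linarith
    have hd : (0 : ℝ) < (n : ℝ) + 2 := by positivity
    have hms : s m < t m := (h.1 m).2.1
    have hkm0 : (0 : ℤ) < km := by
      have h0 : (0 : ℝ) < (km : ℝ) := by nlinarith
      exact_mod_cast h0
    set FI := (F.erase m).filter (fun j => t j < t m) with hFIdef
    set FR := (F.erase m).filter (fun j => ¬ t j < t m) with hFRdef
    have hsplit : ∀ j ∈ F.erase m, (s m < s j ∧ s j < t j ∧ t j < t m) ∨ t m < s j := by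
      intro j hj
      obtain ⟨hjm, hjF⟩ := Finset.mem_erase.mp hj
      have hs := hmin' j hjF hjm
      rcases split_cases h (Ne.symm hjm) hs with ⟨h1, h2⟩ | h1
      · exact Or.inl ⟨hs, h1, h2⟩
      · exact Or.inr h1
    have hFIprop : ∀ j ∈ FI, s m ≤ s j ∧ t j < t m := by
      intro j hj
      obtain ⟨hje, hjt⟩ := Finset.mem_filter.mp hj
      rcases hsplit j hje with ⟨h1, _, h3⟩ | h1
      · exact ⟨h1.le, h3⟩
      · have := (h.1 j).2.1
        exact absurd hjt (by push_neg; linarith)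
    have hFRprop : ∀ j ∈ FR, t m < s j := by
      intro j hj
      obtain ⟨hje, hjt⟩ := Finset.mem_filter.mp hj
      rcases hsplit j hje with ⟨_, _, h3⟩ | h1
      · exact absurd h3 hjt
      · exact h1
    have hFRmem : ∀ j ∈ FR, j ∈ F := fun j hj =>
      (Finset.mem_erase.mp (Finset.mem_filter.mp hj).1).2
    have hFImem : ∀ j ∈ FI, j ∈ F := fun j hj =>
      (Finset.mem_erase.mp (Finset.mem_filter.mp hj).1).2
    have hcardsplit : FI.card + FR.card = (F.erase m).card :=
      Finset.card_filter_add_card_filter_not _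
    have herase : (F.erase m).card = F.card - 1 := Finset.card_erase_of_mem hmF
    have hF1 : 1 ≤ F.card := Finset.card_pos.mpr hne
    have hFcard : F.card = FI.card + FR.card + 1 := by omega
    have htmb : t m < b := (hab m hmF).2
    have hma : a ≤ s m := (hab m hmF).1
    have hcast : (F.card : ℝ) = (FI.card : ℝ) + (FR.card : ℝ) + 1 := by
      exact_mod_cast hFcard
    -- plain bound for FR (used when p ∉ FR)
    have hFRplain : FR.Nonempty → (FR.card : ℝ) < ((n : ℝ) + 2) * (b - t m) := by
      intro hne'
      refine count_plain h FR.card FR le_rfl hne' (t m) b (fun i hi => ?_)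
      exact ⟨(hFRprop i hi).le, (hab i (hFRmem i hi)).2⟩
    have hFRboth : (FR.card : ℝ) < ((n : ℝ) + 2) * (b - t m) := by
      rcases FR.eq_empty_or_nonempty with he | hne'
      · rw [he]; simp; nlinarith
      · exact hFRplain hne'
    -- plain bound for FI (used when p ∉ FI)
    have hFIplain : (FI.card : ℝ) ≤ (km : ℝ) - 1 := by
      rcases FI.eq_empty_or_nonempty with he | hne'
      · rw [he]
        have h1 : (1 : ℝ) ≤ (km : ℝ) := by exact_mod_cast hkm0
        simp
        linarith
      · have hlt := count_plain h FI.card FI le_rfl hne' (s m) (t m)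
          (fun i hi => hFIprop i hi)
        rw [hkm'] at hlt
        have hlt' : (FI.card : ℤ) < km := by exact_mod_cast hlt
        have hle' : (FI.card : ℤ) ≤ km - 1 := by omega
        calc (FI.card : ℝ) = (((FI.card : ℤ)) : ℝ) := by push_cast; ring
          _ ≤ ((km - 1 : ℤ) : ℝ) := by exact_mod_cast hle'
          _ = (km : ℝ) - 1 := by push_cast; ring
    by_cases hmp : m = p
    · -- the marked leaf is the minimal one: FI is empty
      subst hmp
      have hFIe : FI = ∅ := by
        rw [Finset.eq_empty_iff_forall_notMem]
        intro j hj
        have hje := (Finset.mem_filter.mp hj).1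
        obtain ⟨hjm, hjF⟩ := Finset.mem_erase.mp hje
        have hjt := (Finset.mem_filter.mp hj).2
        rcases hsplit j hje with ⟨h1, _, h3⟩ | h1
        · exact hnoin j hjF hjm ⟨h1, h3⟩
        · have := (h.1 j).2.1
          exact absurd hjt (by push_neg; linarith)
      have hFI0 : (FI.card : ℝ) = 0 := by rw [hFIe]; simp
      rw [hcast, hFI0, hkp']
      have hkmkp : (km : ℝ) = (kp : ℝ) := by rw [← hkm', ← hkp']
      have hmul : ((n : ℝ) + 2) * (b - s m) ≤ ((n : ℝ) + 2) * (b - a) :=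
        mul_le_mul_of_nonneg_left (by linarith) (by positivity)
      have hsum : ((n : ℝ) + 2) * (t m - s m) + ((n : ℝ) + 2) * (b - t m)
          = ((n : ℝ) + 2) * (b - s m) := by ring
      linarith
    · have hpe : p ∈ F.erase m := Finset.mem_erase.mpr ⟨fun he => hmp he.symm, hpF⟩
      by_cases hpFI : p ∈ FI
      · -- marked leaf is nested inside m
        have hle : FI.card ≤ N := by omega
        have hrec := ih FI hle p hpFI
          (fun j hj hjp => hnoin j (hFImem j hj) hjp) (s m) (t m)
          (fun i hi => hFIprop i hi)
        rw [hkp', hkm'] at hrec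
        -- integrality: FI.card + kp - 1 ≤ km - 1
        have hint : ((FI.card : ℤ) : ℝ) + ((kp : ℝ) - 1) < (km : ℝ) := by
          push_cast; push_cast at hrec; linarith
        have hint' : (FI.card : ℤ) + (kp - 1) < km := by exact_mod_cast hint
        have hint'' : (FI.card : ℤ) + (kp - 1) ≤ km - 1 := by omega
        have hintr : (FI.card : ℝ) + ((kp : ℝ) - 1) ≤ (km : ℝ) - 1 := by
          exact_mod_cast hint''
        rw [hcast, hkp']
        have hmul : ((n : ℝ) + 2) * (b - s m) ≤ ((n : ℝ) + 2) * (b - a) :=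
          mul_le_mul_of_nonneg_left (by linarith) (by positivity)
        have hsum : ((n : ℝ) + 2) * (t m - s m) + ((n : ℝ) + 2) * (b - t m)
            = ((n : ℝ) + 2) * (b - s m) := by ring
        linarith
      · -- marked leaf lies to the right of m
        have hpFR : p ∈ FR := by
          have hnp : ¬ t p < t m := fun hcon =>
            hpFI (Finset.mem_filter.mpr ⟨hpe, hcon⟩)
          exact Finset.mem_filter.mpr ⟨hpe, hnp⟩
        have hle : FR.card ≤ N := by omega
        have hrec := ih FR hle p hpFR
          (fun j hj hjp => hnoin j (hFRmem j hj) hjp) (t m) b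
          (fun i hi => ⟨(hFRprop i hi).le, (hab i (hFRmem i hi)).2⟩)
        rw [hcast, hkp']
        rw [hkp'] at hrec
        have hmul : ((n : ℝ) + 2) * (b - s m) ≤ ((n : ℝ) + 2) * (b - a) :=
          mul_le_mul_of_nonneg_left (by linarith) (by positivity)
        have hsum : ((n : ℝ) + 2) * (t m - s m) + ((n : ℝ) + 2) * (b - t m)
            = ((n : ℝ) + 2) * (b - s m) := by ring
        linarith
end LastLeafAux

/-- For a generic degree-`d` primitive major (`d = n + 2 ≥ 2`) with
starting points ordered increasingly, the largest starting point `s_{d-1}` satisfies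
`s_{d-1} < (d-1)/d`, and its terminal point is `t_{d-1} = s_{d-1} + 1/d`. -/
theorem last_leaf (n : ℕ) (s t : Fin (n + 1) → ℝ)
    (hmajor : IsGenericMajor (n + 2) s t) (hmono : StrictMono s) :
    s (Fin.last n) < ((n : ℝ) + 1) / ((n : ℝ) + 2) ∧
      t (Fin.last n) = s (Fin.last n) + 1 / ((n : ℝ) + 2) := by
  classical
  have hd : (0 : ℝ) < (n : ℝ) + 2 := by positivity
  set p := Fin.last n with hp
  have hnoin : ∀ j ∈ (Finset.univ : Finset (Fin (n + 1))), j ≠ p →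
      ¬ (s p < s j ∧ t j < t p) := by
    intro j _ hj hcon
    have hlt : j < p := lt_of_le_of_ne (Fin.le_last j) hj
    have := hmono hlt
    linarith [hcon.1]
  have hcard : (Finset.univ : Finset (Fin (n + 1))).card = n + 1 := by simp
  have key := LastLeafAux.count_marked hmajor (n + 1) Finset.univ (le_of_eq hcard)
    p (Finset.mem_univ p) hnoin 0 1
    (fun i _ => ⟨(hmajor.1 i).1, (hmajor.1 i).2.2⟩)
  rw [hcard] at key
  obtain ⟨kp, hkp⟩ := hmajor.2.2.1 p
  have hkp' : ((n : ℝ) + 2) * (t p - s p) = kp := by push_cast at hkp ⊢; linarith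
  have hsp := (hmajor.1 p).2.1
  have hkp0 : (0 : ℤ) < kp := by
    have h0 : (0 : ℝ) < (kp : ℝ) := by nlinarith
    exact_mod_cast h0
  have hkp2 : kp < 2 := by
    have h2 : (kp : ℝ) < 2 := by
      push_cast at key
      nlinarith
    exact_mod_cast h2
  have hkp1 : kp = 1 := by omega
  have heq : ((n : ℝ) + 2) * (t p - s p) = 1 := by
    rw [hkp', hkp1]; norm_num
  have ht : t p = s p + 1 / ((n : ℝ) + 2) := by
    field_simp
    linarith
  refine ⟨?_, ht⟩
  have htp1 : t p < 1 := (hmajor.1 p).2.2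
  rw [lt_div_iff₀ hd]
  nlinarith
end

section
/- Let d ≥ 2 and let (s_i, t_i)_{i=1}^{d−1} encode a generic degree-d primitive major with starting points ordered so that s_1 < s_2 < ⋯ < s_{d−1}. Then s_i < i/d for every i ∈ {1,…,d−1}. -/
open Set

/-- Key counting lemma: a nonempty family of unlinked leaves whose intervals lie in
`[a, b)` has cardinality `< d * (b - a)`. -/
lemma key_count (d : ℕ) (hd : 2 ≤ d) (s t : Fin (d - 1) → ℝ)
    (hmajor : IsGenericMajor d s t) :
    ∀ (S : Finset (Fin (d - 1))) (a b : ℝ), S.Nonempty →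
      (∀ j ∈ S, a ≤ s j ∧ t j < b) → (S.card : ℝ) < d * (b - a) := by
  obtain ⟨hst, hinj, hint, hunlink⟩ := hmajor
  have hdpos : (0 : ℝ) < d := by positivity
  intro S
  induction S using Finset.strongInduction with
  | _ S IH =>
    intro a b hne hab
    obtain ⟨j0, hj0S, hj0min⟩ := S.exists_min_image s hne
    -- basic facts about j0
    have ht0b : t j0 < b := (hab j0 hj0S).2
    have hs0t0 : s j0 < t j0 := (hst j0).2.1
    -- for j ∈ S, j ≠ j0 : either nested (t j < t j0) or outside (t j0 < s j)
    have hcases : ∀ j ∈ S.erase j0, (s j < t j0 ∧ t j < t j0) ∨ t j0 < s j := by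
      intro j hj
      have hjne : j ≠ j0 := Finset.ne_of_mem_erase hj
      have hjS : j ∈ S := Finset.mem_of_mem_erase hj
      have hsle : s j0 ≤ s j := hj0min j hjS
      have hsne : s j ≠ s j0 := by
        intro h
        exact hjne (Sum.inl_injective (hinj (show Sum.elim s t (Sum.inl j) = Sum.elim s t (Sum.inl j0) from h)))
      have hslt : s j0 < s j := lt_of_le_of_ne hsle (Ne.symm hsne)
      rcases hunlink j0 j (Ne.symm hjne) with ⟨h1, h2⟩ | ⟨h1, h2⟩
      · exact Or.inl ⟨h1.2, h2.2⟩
      · right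
        rw [Set.mem_Icc] at h1
        push_neg at h1
        exact h1 hsle
    -- split S.erase j0
    set Inner := (S.erase j0).filter (fun j => s j < t j0) with hInner
    set Outer := (S.erase j0).filter (fun j => ¬ s j < t j0) with hOuter
    have hInS : Inner ⊆ S := (Finset.filter_subset _ _).trans (Finset.erase_subset _ _)
    have hOutS : Outer ⊆ S := (Finset.filter_subset _ _).trans (Finset.erase_subset _ _)
    have hInSS : Inner ⊂ S := Finset.ssubset_iff_of_subset hInS |>.mpr
      ⟨j0, hj0S, fun h => (Finset.ne_of_mem_erase (Finset.mem_of_mem_filter _ h)) rfl⟩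
    have hOutSS : Outer ⊂ S := Finset.ssubset_iff_of_subset hOutS |>.mpr
      ⟨j0, hj0S, fun h => (Finset.ne_of_mem_erase (Finset.mem_of_mem_filter _ h)) rfl⟩
    -- integer length of leaf j0
    obtain ⟨k, hk⟩ := hint j0
    have hk1 : (1 : ℝ) ≤ (k : ℝ) := by
      have : (0 : ℝ) < (k : ℝ) := by rw [← hk]; nlinarith
      exact_mod_cast (by exact_mod_cast this : (0 : ℤ) < k)
    -- Inner bound
    have hInnerB : (Inner.card : ℝ) ≤ d * (t j0 - s j0) - 1 := by
      rcases Inner.eq_empty_or_nonempty with h | h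
      · simp [h]; linarith [hk ▸ hk1]
      · have hIn : ∀ j ∈ Inner, s j0 ≤ s j ∧ t j < t j0 := by
          intro j hj
          have hj' := Finset.mem_filter.mp hj
          rcases hcases j hj'.1 with ⟨h1, h2⟩ | h1
          · exact ⟨hj0min j (Finset.mem_of_mem_erase hj'.1), h2⟩
          · exact absurd hj'.2 (not_lt.mpr h1.le)
        have := IH Inner hInSS (s j0) (t j0) h hIn
        rw [hk] at this ⊢
        have : (Inner.card : ℤ) < k := by exact_mod_cast this
        have : (Inner.card : ℤ) ≤ k - 1 := by omega
        calc (Inner.card : ℝ) ≤ (k : ℝ) - 1 := by exact_mod_cast this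
          _ = (k : ℝ) - 1 := rfl
    -- Outer bound
    have hOuterB : (Outer.card : ℝ) < d * (b - t j0) := by
      rcases Outer.eq_empty_or_nonempty with h | h
      · simp [h]; nlinarith
      · refine IH Outer hOutSS (t j0) b h ?_
        intro j hj
        have hj' := Finset.mem_filter.mp hj
        rcases hcases j hj'.1 with ⟨h1, h2⟩ | h1
        · exact absurd h1 hj'.2
        · exact ⟨h1.le, (hab j (hOutS hj)).2⟩
    -- cardinality decomposition
    have hcard : S.card = Inner.card + Outer.card + 1 := by
      have h1 : Inner.card + Outer.card = (S.erase j0).card :=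
        Finset.card_filter_add_card_filter_not _
      have h2 : (S.erase j0).card = S.card - 1 := Finset.card_erase_of_mem hj0S
      have h3 : 1 ≤ S.card := Finset.card_pos.mpr hne
      omega
    have ha0 : a ≤ s j0 := (hab j0 hj0S).1
    have : (S.card : ℝ) = (Inner.card : ℝ) + (Outer.card : ℝ) + 1 := by
      exact_mod_cast congrArg (Nat.cast : ℕ → ℝ) hcard
    nlinarith

/-- For a generic degree-`d` primitive major with starting points
ordered increasingly (`s` strictly monotone, index `i : Fin (d-1)` corresponding to the
`(i+1)`-st leaf), each starting point satisfies `sᵢ < i/d`. -/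
theorem starting_points_bound (d : ℕ) (hd : 2 ≤ d) (s t : Fin (d - 1) → ℝ)
    (hmajor : IsGenericMajor d s t) (hmono : StrictMono s) :
    ∀ i : Fin (d - 1), s i < ((i : ℕ) + 1 : ℝ) / d := by
  intro i
  have hdpos : (0 : ℝ) < d := by positivity
  have hkey := key_count d hd s t hmajor (Finset.Ici i) (s i) 1
    ⟨i, Finset.mem_Ici.mpr le_rfl⟩
    (fun j hj => ⟨hmono.monotone (Finset.mem_Ici.mp hj), (hmajor.1 j).2.2⟩)
  have hcard : (Finset.Ici i).card = (d - 1) - (i : ℕ) := Fin.card_Ici i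
  rw [hcard] at hkey
  have hi : (i : ℕ) < d - 1 := i.isLt
  have hcast : (((d - 1) - (i : ℕ) : ℕ) : ℝ) = (d : ℝ) - 1 - (i : ℕ) := by
    have h1 : (i : ℕ) ≤ d - 1 := hi.le
    have h2 : 1 ≤ d := by omega
    push_cast [Nat.cast_sub h1, Nat.cast_sub h2]
    ring
  rw [hcast] at hkey
  rw [lt_div_iff₀ hdpos]
  nlinarith
end

section
/- Let d ≥ 3 and let (s_i, t_i)_{i=1}^{d−1} encode a generic degree-d primitive major with starting points ordered so that s_1 < s_2 < ⋯ < s_{d−1}. Define c : [0,1) → ℝ by c(x) = (d/(d−1))·x for x ≤ s_{d−1} and c(x) = (d/(d−1))·(x − 1/d) for x > s_{d−1}. Then no s_i or t_i with i ≤ d−2 lies in the open interval (s_{d−1}, t_{d−1}), and the family (c(s_i), c(t_i))_{i=1}^{d−2} encodes a generic degree-(d−1) primitive major. -/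
open Set

/-- The collapsing map of the derivation: collapse the interval `[sLast, sLast + 1/d]`
and affinely rescale the circle by `d/(d-1)`, keeping `0` fixed:
`c x = (d/(d-1))·x` for `x ≤ sLast` and `c x = (d/(d-1))·(x - 1/d)` for `x > sLast`. -/
noncomputable def cmap (d : ℕ) (sLast : ℝ) (x : ℝ) : ℝ :=
  if x ≤ sLast then ((d : ℝ) / ((d : ℝ) - 1)) * x
  else ((d : ℝ) / ((d : ℝ) - 1)) * (x - 1 / (d : ℝ))

private lemma cmap_strict {d : ℕ} (hd : 2 ≤ d) {a x y : ℝ}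
    (hx : x ≤ a ∨ a + 1 / d < x) (hy : y ≤ a ∨ a + 1 / d < y) (h : x < y) :
    cmap d a x < cmap d a y := by
  have hD : (1:ℝ) < (d:ℝ) := by exact_mod_cast hd
  have hD1 : (0:ℝ) < (d:ℝ) - 1 := by linarith
  have hr : (0:ℝ) < (d:ℝ) / ((d:ℝ) - 1) := div_pos (by linarith) hD1
  unfold cmap
  by_cases h1 : x ≤ a <;> by_cases h2 : y ≤ a
  · simp only [if_pos h1, if_pos h2]
    exact mul_lt_mul_of_pos_left h hr
  · simp only [if_pos h1, if_neg h2]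
    have hy' : a + 1/d < y := hy.resolve_left h2
    have hpos : (0:ℝ) < 1/(d:ℝ) := by positivity
    exact mul_lt_mul_of_pos_left (by linarith) hr
  · exact absurd (le_of_lt (lt_of_lt_of_le h h2)) h1
  · simp only [if_neg h1, if_neg h2]
    exact mul_lt_mul_of_pos_left (by linarith) hr

private lemma cmap_sub_le (d : ℕ) (hd : 2 ≤ d) {a x y : ℝ} (hx : x ≤ a) (hy : y ≤ a) :
    ((d:ℝ) - 1) * (cmap d a y - cmap d a x) = (d:ℝ) * (y - x) := by
  have hD : (1:ℝ) < (d:ℝ) := by exact_mod_cast hd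
  have hne : (d:ℝ) - 1 ≠ 0 := by linarith
  simp only [cmap, if_pos hx, if_pos hy]
  field_simp

private lemma cmap_sub_gt (d : ℕ) (hd : 2 ≤ d) {a x y : ℝ} (hx : x ≤ a) (hy : ¬ y ≤ a) :
    ((d:ℝ) - 1) * (cmap d a y - cmap d a x) = (d:ℝ) * (y - x) - 1 := by
  have hD : (1:ℝ) < (d:ℝ) := by exact_mod_cast hd
  have hne : (d:ℝ) - 1 ≠ 0 := by linarith
  have hne0 : (d:ℝ) ≠ 0 := by linarith
  simp only [cmap, if_pos hx, if_neg hy]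
  field_simp
  ring


/-- For a generic degree-`d` primitive major (`d = n + 3 ≥ 3`) with
increasing starting points, no endpoint of another leaf lies in the open interval
`(s_{d-1}, t_{d-1})`, and the images of the first `d-2` leaves under the collapsing map
`c` encode a generic degree-`(d-1)` primitive major (the derived primitive major). -/
theorem derived_major (n : ℕ) (s t : Fin (n + 2) → ℝ)
    (hmajor : IsGenericMajor (n + 3) s t) (hmono : StrictMono s) :
    (∀ i : Fin (n + 2), i ≠ Fin.last (n + 1) →
        s i ∉ Ioo (s (Fin.last (n + 1))) (t (Fin.last (n + 1))) ∧
        t i ∉ Ioo (s (Fin.last (n + 1))) (t (Fin.last (n + 1)))) ∧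
    IsGenericMajor (n + 2)
      (fun i : Fin (n + 1) => cmap (n + 3) (s (Fin.last (n + 1))) (s i.castSucc))
      (fun i : Fin (n + 1) => cmap (n + 3) (s (Fin.last (n + 1))) (t i.castSucc)) := by
  obtain ⟨hrange, hinj, hint, hlink⟩ := hmajor
  have hd : 2 ≤ n + 3 := by omega
  have hD : (1:ℝ) < ((n+3:ℕ):ℝ) := by exact_mod_cast hd
  have hD0 : (0:ℝ) < ((n+3:ℕ):ℝ) := by linarith
  set L : Fin (n+2) := Fin.last (n+1) with hLdef
  have hsa : ∀ i : Fin (n+1), s i.castSucc < s L := fun i => hmono (Fin.castSucc_lt_last i)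
  have hslt : ∀ i : Fin (n+2), i ≠ L → s i < s L := by
    intro i hi
    exact hmono (Fin.lt_last_iff_ne_last.mpr hi)
  -- the last leaf has length at least 1/(n+3)
  have hb1 : s L + 1/((n+3:ℕ):ℝ) ≤ t L := by
    obtain ⟨k, hk⟩ := hint L
    have h1 : (0:ℝ) < (k:ℝ) := by
      rw [← hk]; exact mul_pos hD0 (sub_pos.2 (hrange L).2.1)
    have h2 : (0:ℤ) < k := by exact_mod_cast h1
    have h3 : (1:ℝ) ≤ (k:ℝ) := by exact_mod_cast h2
    have h4 : 1 ≤ ((n+3:ℕ):ℝ) * (t L - s L) := by rw [hk]; exact h3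
    rw [← sub_nonneg]
    have h5 : 1/((n+3:ℕ):ℝ) ≤ t L - s L := by
      rw [div_le_iff₀ hD0]
      nlinarith
    linarith
  have ht_cases : ∀ i : Fin (n+2), i ≠ L → t i < s L ∨ t L < t i := by
    intro i hi
    rcases hlink L i (fun h => hi h.symm) with h | h
    · exact absurd h.1.1 (not_lt.2 (hslt i hi).le)
    · have h2 := h.2
      rw [mem_Icc, not_and_or, not_le, not_le] at h2
      exact h2
  have goodS : ∀ i : Fin (n+1),
      s i.castSucc ≤ s L ∨ s L + 1/((n+3:ℕ):ℝ) < s i.castSucc :=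
    fun i => Or.inl (hsa i).le
  have goodT : ∀ i : Fin (n+1),
      t i.castSucc ≤ s L ∨ s L + 1/((n+3:ℕ):ℝ) < t i.castSucc := by
    intro i
    have hne : i.castSucc ≠ L := (Fin.castSucc_lt_last i).ne
    rcases ht_cases _ hne with h | h
    · exact Or.inl h.le
    · exact Or.inr (lt_of_le_of_lt hb1 h)
  constructor
  · intro i hi
    constructor
    · intro hmem
      exact absurd hmem.1 (not_lt.2 (hslt i hi).le)
    · intro hmem
      rcases ht_cases i hi with h | h
      · exact absurd hmem.1 (not_lt.2 h.le)
      · exact absurd hmem.2 (not_lt.2 h.le)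
  refine ⟨fun i => ?_, ?_, fun i => ?_, fun i j hij => ?_⟩
  · -- range conditions
    have hs_le : s i.castSucc ≤ s L := (hsa i).le
    refine ⟨?_, ?_, ?_⟩
    · show 0 ≤ cmap (n+3) (s L) (s i.castSucc)
      simp only [cmap, if_pos hs_le]
      exact mul_nonneg (div_nonneg (by linarith) (by linarith)) (hrange i.castSucc).1
    · exact cmap_strict hd (goodS i) (goodT i) (hrange i.castSucc).2.1
    · show cmap (n+3) (s L) (t i.castSucc) < 1
      have hinv : ((n+3:ℕ):ℝ) * (1/((n+3:ℕ):ℝ)) = 1 := mul_one_div_cancel (ne_of_gt hD0)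
      rcases ht_cases i.castSucc (Fin.castSucc_lt_last i).ne with h | h
      · simp only [cmap, if_pos h.le]
        have h1 : t i.castSucc < 1 - 1/((n+3:ℕ):ℝ) := by
          have := (hrange L).2.2
          linarith
        rw [div_mul_eq_mul_div, div_lt_one (by linarith)]
        nlinarith [mul_lt_mul_of_pos_left h1 hD0]
      · have hgt : ¬ t i.castSucc ≤ s L := by
          push_neg
          exact lt_trans (hrange L).2.1 h
        simp only [cmap, if_neg hgt]
        have h1 : t i.castSucc < 1 := (hrange i.castSucc).2.2
        rw [div_mul_eq_mul_div, div_lt_one (by linarith)]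
        nlinarith [mul_lt_mul_of_pos_left h1 hD0]
  · -- injectivity
    have cinj : ∀ x y : ℝ,
        (x ≤ s L ∨ s L + 1/((n+3:ℕ):ℝ) < x) → (y ≤ s L ∨ s L + 1/((n+3:ℕ):ℝ) < y) →
        cmap (n+3) (s L) x = cmap (n+3) (s L) y → x = y := by
      intro x y hx hy h
      by_contra hne
      rcases lt_or_gt_of_ne hne with h' | h'
      · exact absurd h (ne_of_lt (cmap_strict hd hx hy h'))
      · exact absurd h (ne_of_gt (cmap_strict hd hy hx h'))
    intro u v huv
    rcases u with i | i <;> rcases v with j | j <;>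
      simp only [Sum.elim_inl, Sum.elim_inr] at huv
    · have h1 := cinj _ _ (goodS i) (goodS j) huv
      have h2 := hinj (a₁ := Sum.inl i.castSucc) (a₂ := Sum.inl j.castSucc) (by simpa using h1)
      simp only [Sum.inl.injEq] at h2
      exact congrArg Sum.inl (Fin.castSucc_injective _ h2)
    · have h1 := cinj _ _ (goodS i) (goodT j) huv
      have h2 := hinj (a₁ := Sum.inl i.castSucc) (a₂ := Sum.inr j.castSucc) (by simpa using h1)
      simp at h2
    · have h1 := cinj _ _ (goodT i) (goodS j) huv
      have h2 := hinj (a₁ := Sum.inr i.castSucc) (a₂ := Sum.inl j.castSucc) (by simpa using h1)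
      simp at h2
    · have h1 := cinj _ _ (goodT i) (goodT j) huv
      have h2 := hinj (a₁ := Sum.inr i.castSucc) (a₂ := Sum.inr j.castSucc) (by simpa using h1)
      simp only [Sum.inr.injEq] at h2
      exact congrArg Sum.inr (Fin.castSucc_injective _ h2)
  · -- integer lengths
    obtain ⟨k, hk⟩ := hint i.castSucc
    have hs_le : s i.castSucc ≤ s L := (hsa i).le
    have hcast : ((n+2:ℕ):ℝ) = ((n+3:ℕ):ℝ) - 1 := by push_cast; ring
    rcases ht_cases i.castSucc (Fin.castSucc_lt_last i).ne with h | h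
    · refine ⟨k, ?_⟩
      show ((n+2:ℕ):ℝ) * (cmap (n+3) (s L) (t i.castSucc) - cmap (n+3) (s L) (s i.castSucc)) = k
      rw [hcast, cmap_sub_le (n+3) hd hs_le h.le, hk]
    · refine ⟨k - 1, ?_⟩
      have hgt : ¬ t i.castSucc ≤ s L := by
        push_neg
        exact lt_trans (hrange L).2.1 h
      show ((n+2:ℕ):ℝ) * (cmap (n+3) (s L) (t i.castSucc) - cmap (n+3) (s L) (s i.castSucc)) = ((k - 1 : ℤ) : ℝ)
      rw [hcast, cmap_sub_gt (n+3) hd hs_le hgt, hk]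
      push_cast
      ring
  · -- unlinking
    have hne : i.castSucc ≠ j.castSucc := fun h => hij (Fin.castSucc_injective _ h)
    rcases hlink i.castSucc j.castSucc hne with ⟨h1, h2⟩ | ⟨h1, h2⟩
    · left
      rw [mem_Ioo] at h1 h2
      exact ⟨mem_Ioo.2 ⟨cmap_strict hd (goodS i) (goodS j) h1.1,
               cmap_strict hd (goodS j) (goodT i) h1.2⟩,
             mem_Ioo.2 ⟨cmap_strict hd (goodS i) (goodT j) h2.1,
               cmap_strict hd (goodT j) (goodT i) h2.2⟩⟩
    · right
      rw [mem_Icc, not_and_or, not_le, not_le] at h1 h2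
      constructor
      · rw [mem_Icc, not_and_or, not_le, not_le]
        rcases h1 with h | h
        · exact Or.inl (cmap_strict hd (goodS j) (goodS i) h)
        · exact Or.inr (cmap_strict hd (goodT i) (goodS j) h)
      · rw [mem_Icc, not_and_or, not_le, not_le]
        rcases h2 with h | h
        · exact Or.inl (cmap_strict hd (goodT j) (goodS i) h)
        · exact Or.inr (cmap_strict hd (goodT i) (goodT j) h)
end

section
/- Let θ ∈ (ℝ/ℤ)∖{0} be rational. Then X_θ ⊆ L_θ, and for every (x,y) ∈ L_θ there exists n ≥ 0 such that F^n(x,y) ∈ X_θ; that is, X_θ is an attracting core of L_θ. -/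
/-!
A leaf of `L_θ` is a limit of pre-major leaves, all of which lie in the good region of the major
leaf `{θ/2, (θ+1)/2}`; so it lies in one of the two closed half-circles cut out by the major leaf.
If it neither separates nor meets `P_θ`, its arc inside that half-circle misses `P^S_θ` (the
endpoint `2⁻¹θ` of the half-circle lies outside it), has length `< 1/2`, and contains no preimage
of `θ`. Doubling therefore maps it onto an arc of twice the length that misses `θ`, which must
again be the arc of the image leaf that misses `P^S_θ`. Since `L_θ` is forward invariant off the
diagonal, a leaf whose orbit never met `X_θ` would carry such arcs of length `2ⁿ c < 1/2` for
every `n`.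
-/

open Set Filter

/-- The torus `𝕋 = (ℝ/ℤ) × (ℝ/ℤ)`. -/
abbrev 𝕋 := 𝕊 × 𝕊

/-- The doubling map `τ(x) = 2x` on the circle. -/
noncomputable def dbl : 𝕊 → 𝕊 := fun x => x + x

/-- The doubling map `F(x, y) = (2x, 2y)` on the torus. -/
noncomputable def F : 𝕋 → 𝕋 := fun p => (p.1 + p.1, p.2 + p.2)

/-- The open arc of `(ℝ/ℤ) ∖ {a, b}` containing `z`, i.e. the connected component of
the complement of `{a, b}` containing `z`. -/
def arcAt (a b z : 𝕊) : Set 𝕊 := connectedComponentIn ({a, b}ᶜ : Set 𝕊) z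

/-- The good region `G(a,b)` of a leaf with distinct endpoints `a, b`: the set of pairs
`(x, y)` such that `x` and `y` both lie in the closure of one and the same of the two
open arcs of `(ℝ/ℤ) ∖ {a, b}`. -/
def goodPair (a b : 𝕊) : Set 𝕋 :=
  {p | ∃ z ∈ ({a, b}ᶜ : Set 𝕊),
        p.1 ∈ closure (arcAt a b z) ∧ p.2 ∈ closure (arcAt a b z)}

/-- The good region `G(S)` of a set `S ⊆ 𝕋`: the intersection of the good regions of
all off-diagonal points of `S`. -/
def good (S : Set 𝕋) : Set 𝕋 :=
  {p | ∀ q ∈ S, q.1 ≠ q.2 → p ∈ goodPair q.1 q.2}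

/-- `α ∈ ℝ/ℤ` is periodic under the doubling map. -/
noncomputable def IsPer (α : 𝕊) : Prop := ∃ n > 0, dbl^[n] α = α

/-- The pre-major leaves: `b 0` consists of the two orderings of the major leaf
`{θ/2, (θ+1)/2}`, and `b (i+1) = (F⁻¹(b i) ∩ G(b i)) ∪ b i`. -/
noncomputable def preSeq (θ : ℝ) : ℕ → Set 𝕋
  | 0 => {(((θ / 2 : ℝ) : 𝕊), (((θ + 1) / 2 : ℝ) : 𝕊)),
          ((((θ + 1) / 2 : ℝ) : 𝕊), ((θ / 2 : ℝ) : 𝕊))}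
  | i + 1 => (F ⁻¹' preSeq θ i ∩ good (preSeq θ i)) ∪ preSeq θ i

/-- The set `Pre_θ` of pre-major leaves. -/
noncomputable def Pre (θ : ℝ) : Set 𝕋 := ⋃ i, preSeq θ i

/-- `L_θ`: the set of accumulation points of `Pre_θ` lying off the diagonal. -/
noncomputable def Lset (θ : ℝ) : Set 𝕋 :=
  {p | AccPt p (Filter.principal (Pre θ)) ∧ p.1 ≠ p.2}

open Classical in
/-- `2⁻¹θ`: the periodic element among `{θ/2, (θ+1)/2}` if `θ` is periodic, and `θ/2`
otherwise. -/
noncomputable def halfTheta (θ : ℝ) : 𝕊 :=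
  if IsPer ((θ : ℝ) : 𝕊) then
    (if IsPer ((θ / 2 : ℝ) : 𝕊) then ((θ / 2 : ℝ) : 𝕊) else (((θ + 1) / 2 : ℝ) : 𝕊))
  else ((θ / 2 : ℝ) : 𝕊)

/-- The post-major angle set `P^S_θ = {2⁻¹θ} ∪ {2ⁿθ : n ≥ 0}`. -/
noncomputable def PS (θ : ℝ) : Set 𝕊 :=
  {halfTheta θ} ∪ {x | ∃ n : ℕ, x = dbl^[n] ((θ : ℝ) : 𝕊)}

/-- `(x, y)` separates `P_θ`: `x ≠ y` and both open arcs of `(ℝ/ℤ) ∖ {x, y}` contain a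
point of `P^S_θ`. -/
noncomputable def SepP (θ : ℝ) (p : 𝕋) : Prop :=
  p.1 ≠ p.2 ∧ ∃ u ∈ PS θ, ∃ v ∈ PS θ,
    u ∈ ({p.1, p.2}ᶜ : Set 𝕊) ∧ v ∈ ({p.1, p.2}ᶜ : Set 𝕊) ∧ v ∉ arcAt p.1 p.2 u

/-- `(x, y)` intersects `P_θ`: `x ∈ P^S_θ` or `y ∈ P^S_θ`. -/
noncomputable def IntP (θ : ℝ) (p : 𝕋) : Prop := p.1 ∈ PS θ ∨ p.2 ∈ PS θ

/-- `X_θ`: the points of `L_θ` which separate or intersect `P_θ`. -/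
noncomputable def Xset (θ : ℝ) : Set 𝕋 :=
  {p ∈ Lset θ | SepP θ p ∨ IntP θ p}

open Topology

lemma ne_of_pair_eq_pair {γ : Type*} {a b c d : γ} (h : ({a, b} : Set γ) = {c, d}) (hab : a ≠ b) :
    c ≠ d := by
  rintro rfl
  obtain ⟨h1, h2⟩ | ⟨h1, h2⟩ := pair_eq_pair_iff.mp h <;> exact hab (h1.trans h2.symm)

section CircleArcs

variable {α β : ℝ}

lemma coe_eq_coe_iff_exists_int {r s : ℝ} : (r : 𝕊) = s ↔ ∃ k : ℤ, s = r + k := by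
  rw [QuotientAddGroup.eq_iff_sub_mem, AddSubgroup.mem_zmultiples_iff]
  constructor
  · rintro ⟨k, hk⟩
    exact ⟨-k, by simp only [zsmul_eq_mul, mul_one] at hk; push_cast; linarith⟩
  · rintro ⟨k, rfl⟩
    exact ⟨-k, by simp⟩

lemma coe_add_one (r : ℝ) : ((r + 1 : ℝ) : 𝕊) = r := AddCircle.coe_add_period 1 r

lemma exists_coe_eq_mem_Ico (z : 𝕊) (α : ℝ) : ∃ t ∈ Ico α (α + 1), (t : 𝕊) = z :=
  (AddCircle.coe_image_Ico_eq 1 α).ge (mem_univ z)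

lemma injOn_coe_Ico (α : ℝ) : InjOn ((↑) : ℝ → 𝕊) (Ico α (α + 1)) :=
  fun _ hx _ hy h => (AddCircle.coe_eq_coe_iff_of_mem_Ico hx hy).mp h

lemma coe_ne_coe_of_lt (h : α < β) (h' : β < α + 1) : (α : 𝕊) ≠ β :=
  fun e => h.ne (injOn_coe_Ico α ⟨le_rfl, by linarith⟩ ⟨h.le, h'⟩ e)

def openArc (α β : ℝ) : Set 𝕊 := (↑) '' Ioo α β

def closedArc (α β : ℝ) : Set 𝕊 := (↑) '' Icc α β

lemma openArc_add_int (k : ℤ) : openArc (α + k) (β + k) = openArc α β := by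
  ext z
  constructor
  · rintro ⟨t, ht, rfl⟩
    exact ⟨t - k, ⟨by linarith [ht.1], by linarith [ht.2]⟩,
      coe_eq_coe_iff_exists_int.mpr ⟨k, by ring⟩⟩
  · rintro ⟨t, ht, rfl⟩
    exact ⟨t + k, ⟨by linarith [ht.1], by linarith [ht.2]⟩,
      (coe_eq_coe_iff_exists_int.mpr ⟨k, rfl⟩).symm⟩

lemma openArc_subset_closedArc : openArc α β ⊆ closedArc α β :=
  image_mono Ioo_subset_Icc_self

lemma closedArc_eq_insert_openArc (h : α < β) :
    closedArc α β = insert (β : 𝕊) (insert (α : 𝕊) (openArc α β)) := by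
  rw [closedArc, ← Ico_insert_right h.le, ← Ioo_insert_left h, image_insert_eq, image_insert_eq]
  rfl

lemma isClosed_closedArc : IsClosed (closedArc α β) :=
  (isCompact_Icc.image (f := ((↑) : ℝ → 𝕊)) continuous_quotient_mk').isClosed

lemma closure_openArc (h : α < β) : closure (openArc α β) = closedArc α β := by
  refine (closure_minimal openArc_subset_closedArc isClosed_closedArc).antisymm ?_
  rw [closedArc, openArc, ← closure_Ioo h.ne]
  exact image_closure_subset_closure_image (f := ((↑) : ℝ → 𝕊)) continuous_quotient_mk'

lemma coe_mem_openArc_iff_of_mem_Ico {γ δ t : ℝ} (hγ : α ≤ γ) (hδ : δ ≤ α + 1)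
    (ht : t ∈ Ico α (α + 1)) : (t : 𝕊) ∈ openArc γ δ ↔ t ∈ Ioo γ δ :=
  (injOn_coe_Ico α).mem_image_iff (fun _ hx => ⟨by linarith [hx.1], by linarith [hx.2]⟩) ht

lemma compl_pair_eq_openArc_union (h : α < β) (h' : β < α + 1) :
    ({(α : 𝕊), (β : 𝕊)}ᶜ : Set 𝕊) = openArc α β ∪ openArc β (α + 1) := by
  ext z
  obtain ⟨t, ht, rfl⟩ := exists_coe_eq_mem_Ico z α
  have hα : α ∈ Ico α (α + 1) := ⟨le_rfl, by linarith⟩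
  have hβ : β ∈ Ico α (α + 1) := ⟨h.le, h'⟩
  simp only [mem_compl_iff, mem_insert_iff, mem_singleton_iff, mem_union,
    (injOn_coe_Ico α).eq_iff ht hα, (injOn_coe_Ico α).eq_iff ht hβ,
    coe_mem_openArc_iff_of_mem_Ico le_rfl h'.le ht, coe_mem_openArc_iff_of_mem_Ico h.le le_rfl ht,
    mem_Ioo]
  grind

lemma disjoint_openArc (h : α < β) (h' : β < α + 1) :
    Disjoint (openArc α β) (openArc β (α + 1)) := by
  rw [disjoint_iff_inter_eq_empty, openArc, openArc,
    ← (injOn_coe_Ico α).image_inter (fun x hx => ⟨hx.1.le, by linarith [hx.2]⟩)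
      (fun x hx => ⟨by linarith [hx.1], hx.2⟩), Ioo_inter_Ioo, max_eq_right h.le,
    min_eq_left h'.le, Ioo_self, image_empty]

lemma isOpen_openArc : IsOpen (openArc α β) :=
  QuotientAddGroup.isOpenMap_coe _ isOpen_Ioo

lemma isPreconnected_openArc : IsPreconnected (openArc α β) :=
  isPreconnected_Ioo.image _ continuous_quotient_mk'.continuousOn

lemma arcAt_eq_of_pair_eq {a b c d : 𝕊} (h : ({a, b} : Set 𝕊) = {c, d}) :
    arcAt a b = arcAt c d := by
  unfold arcAt
  rw [h]

lemma arcAt_coe_of_mem_openArc (h : α < β) (h' : β < α + 1) {z : 𝕊} (hz : z ∈ openArc α β) :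
    arcAt α β z = openArc α β := by
  have hcompl := compl_pair_eq_openArc_union h h'
  refine subset_antisymm ?_ (isPreconnected_openArc.subset_connectedComponentIn hz
    (hcompl ▸ subset_union_left))
  refine isPreconnected_connectedComponentIn.subset_left_of_subset_union isOpen_openArc
    isOpen_openArc (disjoint_openArc h h') (hcompl ▸ connectedComponentIn_subset _ _)
    ⟨z, mem_connectedComponentIn (hcompl ▸ Or.inl hz), hz⟩

lemma arcAt_coe_of_mem_openArc' (h : α < β) (h' : β < α + 1) {z : 𝕊}
    (hz : z ∈ openArc β (α + 1)) : arcAt α β z = openArc β (α + 1) := by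
  rw [arcAt_eq_of_pair_eq (b := (β : 𝕊)) (c := β) (d := ((α + 1 : ℝ) : 𝕊))
    (by rw [coe_add_one, pair_comm])]
  exact arcAt_coe_of_mem_openArc h' (by linarith) hz

lemma goodPair_coe (h : α < β) (h' : β < α + 1) :
    goodPair α β =
      closedArc α β ×ˢ closedArc α β ∪ closedArc β (α + 1) ×ˢ closedArc β (α + 1) := by
  have hcompl := compl_pair_eq_openArc_union h h'
  ext p
  constructor
  · rintro ⟨z, hz, h1, h2⟩
    rcases hcompl ▸ hz with hz | hz
    · rw [arcAt_coe_of_mem_openArc h h' hz, closure_openArc h] at h1 h2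
      exact Or.inl ⟨h1, h2⟩
    · rw [arcAt_coe_of_mem_openArc' h h' hz, closure_openArc h'] at h1 h2
      exact Or.inr ⟨h1, h2⟩
  · rintro (⟨h1, h2⟩ | ⟨h1, h2⟩)
    · have hz : (((α + β) / 2 : ℝ) : 𝕊) ∈ openArc α β := ⟨_, ⟨by linarith, by linarith⟩, rfl⟩
      refine ⟨_, hcompl.ge (Or.inl hz), ?_, ?_⟩ <;>
        rwa [arcAt_coe_of_mem_openArc h h' hz, closure_openArc h]
    · have hz : (((β + (α + 1)) / 2 : ℝ) : 𝕊) ∈ openArc β (α + 1) :=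
        ⟨_, ⟨by linarith, by linarith⟩, rfl⟩
      refine ⟨_, hcompl.ge (Or.inr hz), ?_, ?_⟩ <;>
        rwa [arcAt_coe_of_mem_openArc' h h' hz, closure_openArc h']

lemma coe_pair_eq_coe_pair {u v u' v' : ℝ}
    (h : ({(u : 𝕊), (v : 𝕊)} : Set 𝕊) = {(u' : 𝕊), (v' : 𝕊)})
    (huv : u < v) (hvu : v < u + 1) (huv' : u' < v') (hvu' : v' < u' + 1) :
    (∃ k : ℤ, u' = u + k ∧ v' = v + k) ∨ (∃ k : ℤ, u' = v + k ∧ v' = u + 1 + k) := by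
  rcases pair_eq_pair_iff.mp h with ⟨e1, e2⟩ | ⟨e1, e2⟩
  · obtain ⟨j, rfl⟩ := coe_eq_coe_iff_exists_int.mp e1
    obtain ⟨k, rfl⟩ := coe_eq_coe_iff_exists_int.mp e2
    have h1 : k - j < 1 := by exact_mod_cast (show ((k - j : ℤ) : ℝ) < 1 by push_cast; linarith)
    have h2 : -1 < k - j := by
      exact_mod_cast (show ((-1 : ℤ) : ℝ) < ((k - j : ℤ) : ℝ) by push_cast; linarith)
    obtain rfl : j = k := by omega
    exact Or.inl ⟨j, rfl, rfl⟩
  · obtain ⟨j, rfl⟩ := coe_eq_coe_iff_exists_int.mp e1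
    obtain ⟨k, rfl⟩ := coe_eq_coe_iff_exists_int.mp e2
    have h1 : 0 < j - k := by
      exact_mod_cast (show ((0 : ℤ) : ℝ) < ((j - k : ℤ) : ℝ) by push_cast; linarith)
    have h2 : j - k < 2 := by
      exact_mod_cast (show ((j - k : ℤ) : ℝ) < ((2 : ℤ) : ℝ) by push_cast; linarith)
    obtain rfl : j = k + 1 := by omega
    exact Or.inr ⟨k, rfl, by push_cast; ring⟩

end CircleArcs

section Doubling

lemma dbl_coe (r : ℝ) : dbl r = ((2 * r : ℝ) : 𝕊) := by
  rw [dbl, ← AddCircle.coe_add, two_mul]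

lemma eq_or_eq_add_half_of_dbl_eq {x y : 𝕊} (h : dbl y = dbl x) :
    y = x ∨ y = x + ((1 / 2 : ℝ) : 𝕊) := by
  induction x using QuotientAddGroup.induction_on with | H r =>
  induction y using QuotientAddGroup.induction_on with | H s =>
  rw [← AddCircle.coe_add]
  obtain ⟨k, hk⟩ := coe_eq_coe_iff_exists_int.mp (h.symm.trans (dbl_coe s))
  obtain ⟨m, rfl | rfl⟩ := Int.even_or_odd' k
  · exact Or.inl (coe_eq_coe_iff_exists_int.mpr ⟨m, by push_cast at hk; linarith⟩).symm
  · exact Or.inr (coe_eq_coe_iff_exists_int.mpr ⟨m, by push_cast at hk; linarith⟩).symm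

lemma dbl_coe_div_two (θ : ℝ) : dbl ((θ / 2 : ℝ) : 𝕊) = θ := by
  rw [dbl_coe, mul_div_cancel₀ θ two_ne_zero]

lemma coe_add_one_div_two (θ : ℝ) : (((θ + 1) / 2 : ℝ) : 𝕊) = ((θ / 2 + 1 / 2 : ℝ) : 𝕊) := by
  rw [add_div]

lemma dbl_coe_add_one_div_two (θ : ℝ) : dbl (((θ + 1) / 2 : ℝ) : 𝕊) = θ := by
  rw [dbl_coe, mul_div_cancel₀ _ two_ne_zero, coe_add_one]

lemma eq_or_eq_of_dbl_eq_coe {θ : ℝ} {z : 𝕊} (h : dbl z = θ) :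
    z = ((θ / 2 : ℝ) : 𝕊) ∨ z = (((θ + 1) / 2 : ℝ) : 𝕊) := by
  rw [coe_add_one_div_two, AddCircle.coe_add]
  exact eq_or_eq_add_half_of_dbl_eq (h.trans (dbl_coe_div_two θ).symm)

lemma eventually_eq_of_dbl_eq (x : 𝕊) : ∀ᶠ y in 𝓝 x, dbl y = dbl x → y = x := by
  have hhalf : ((1 / 2 : ℝ) : 𝕊) ≠ 0 :=
    (coe_ne_coe_of_lt (α := 0) (by norm_num) (by norm_num)).symm
  filter_upwards [eventually_ne_nhds (add_ne_left.mpr hhalf).symm] with y hy hdbl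
  exact (eq_or_eq_add_half_of_dbl_eq hdbl).resolve_right hy

lemma continuous_F : Continuous F := by
  unfold F
  fun_prop

lemma eventually_eq_of_F_eq (p : 𝕋) : ∀ᶠ y in 𝓝 p, F y = F p → y = p := by
  filter_upwards [(eventually_eq_of_dbl_eq p.1).prodMk_nhds (eventually_eq_of_dbl_eq p.2)]
    with y hy hF
  exact Prod.ext (hy.1 (congrArg Prod.fst hF)) (hy.2 (congrArg Prod.snd hF))

lemma pair_F_eq {q : 𝕋} {u v : ℝ} (h : ({q.1, q.2} : Set 𝕊) = {(u : 𝕊), (v : 𝕊)}) :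
    ({(F q).1, (F q).2} : Set 𝕊) = {((2 * u : ℝ) : 𝕊), ((2 * v : ℝ) : 𝕊)} := by
  rw [← dbl_coe, ← dbl_coe, ← image_pair, ← h, image_pair]
  rfl

end Doubling

section Leaves

variable {θ : ℝ}

lemma goodPair_major (θ : ℝ) :
    goodPair ((θ / 2 : ℝ) : 𝕊) (((θ + 1) / 2 : ℝ) : 𝕊) =
      closedArc (θ / 2) (θ / 2 + 1 / 2) ×ˢ closedArc (θ / 2) (θ / 2 + 1 / 2) ∪
        closedArc (θ / 2 + 1 / 2) (θ / 2 + 1) ×ˢ closedArc (θ / 2 + 1 / 2) (θ / 2 + 1) := by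
  rw [coe_add_one_div_two]
  exact goodPair_coe (by linarith) (by linarith)

lemma mk_mem_preSeq (θ : ℝ) (i : ℕ) :
    ((((θ / 2 : ℝ) : 𝕊), (((θ + 1) / 2 : ℝ) : 𝕊)) : 𝕋) ∈ preSeq θ i := by
  induction i with
  | zero => exact Or.inl rfl
  | succ i ih => exact Or.inr ih

lemma preSeq_subset_goodPair (θ : ℝ) (i : ℕ) :
    preSeq θ i ⊆ goodPair ((θ / 2 : ℝ) : 𝕊) (((θ + 1) / 2 : ℝ) : 𝕊) := by
  induction i with
  | zero =>
    have ha : ((θ / 2 : ℝ) : 𝕊) ∈ closedArc (θ / 2) (θ / 2 + 1 / 2) :=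
      ⟨_, ⟨le_rfl, by linarith⟩, rfl⟩
    have hb : (((θ + 1) / 2 : ℝ) : 𝕊) ∈ closedArc (θ / 2) (θ / 2 + 1 / 2) :=
      ⟨_, ⟨by linarith, le_rfl⟩, (coe_add_one_div_two θ).symm⟩
    rw [goodPair_major]
    rintro p (rfl | rfl)
    exacts [Or.inl ⟨ha, hb⟩, Or.inl ⟨hb, ha⟩]
  | succ i ih =>
    rintro p (⟨-, hgood⟩ | hp)
    exacts [hgood _ (mk_mem_preSeq θ i) (coe_ne_coe_of_lt (by linarith) (by linarith)), ih hp]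

lemma Lset_subset_goodPair (θ : ℝ) :
    Lset θ ⊆ goodPair ((θ / 2 : ℝ) : 𝕊) (((θ + 1) / 2 : ℝ) : 𝕊) := by
  have hclosed : IsClosed (goodPair ((θ / 2 : ℝ) : 𝕊) (((θ + 1) / 2 : ℝ) : 𝕊)) := by
    rw [goodPair_major]
    exact (isClosed_closedArc.prod isClosed_closedArc).union
      (isClosed_closedArc.prod isClosed_closedArc)
  exact fun p hp => closure_minimal (iUnion_subset (preSeq_subset_goodPair θ)) hclosed
    (mem_closure_iff_clusterPt.mpr hp.1.clusterPt)

lemma F_mem_Pre_or_eq {p : 𝕋} (hp : p ∈ Pre θ) : F p ∈ Pre θ ∨ F p = ((θ : 𝕊), (θ : 𝕊)) := by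
  obtain ⟨i, hi⟩ := mem_iUnion.mp hp
  induction i generalizing p with
  | zero =>
    right
    rcases hi with rfl | rfl
    exacts [Prod.ext (dbl_coe_div_two θ) (dbl_coe_add_one_div_two θ),
      Prod.ext (dbl_coe_add_one_div_two θ) (dbl_coe_div_two θ)]
  | succ i ih =>
    rcases hi with ⟨hF, -⟩ | hi
    exacts [Or.inl (mem_iUnion_of_mem i hF), ih (mem_iUnion_of_mem i hi) hi]

/-- Doubling is locally injective, so it carries accumulation points of `Pre_θ` to accumulation
points of `F(Pre_θ) ⊆ Pre_θ ∪ {(θ, θ)}`. -/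
lemma F_mem_Lset {p : 𝕋} (hp : p ∈ Lset θ) (hF : (F p).1 ≠ (F p).2) : F p ∈ Lset θ := by
  refine ⟨?_, hF⟩
  have hc : F p ≠ ((θ : 𝕊), (θ : 𝕊)) := fun h => hF (by rw [h])
  have hp' := accPt_iff_frequently.mp hp.1
  rw [accPt_iff_frequently]
  refine (continuous_F.tendsto p).frequently ((hp'.and_eventually ((eventually_eq_of_F_eq p).and
    (continuous_F.continuousAt.eventually_ne hc))).mono ?_)
  rintro y ⟨⟨hyp, hy⟩, hinj, hyc⟩
  exact ⟨mt hinj hyp, (F_mem_Pre_or_eq hy).resolve_right hyc⟩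

end Leaves

section ShortLifts

variable {θ : ℝ} {q : 𝕋}

lemma theta_mem_PS (θ : ℝ) : (θ : 𝕊) ∈ PS θ := Or.inr ⟨0, rfl⟩

lemma halfTheta_mem_PS (θ : ℝ) : halfTheta θ ∈ PS θ := Or.inl rfl

lemma halfTheta_mem_pair (θ : ℝ) :
    halfTheta θ ∈ ({((θ / 2 : ℝ) : 𝕊), (((θ + 1) / 2 : ℝ) : 𝕊)} : Set 𝕊) := by
  unfold halfTheta
  split_ifs <;> simp

lemma notMem_pair_of_mem_PS (hX : q ∉ Xset θ) (hq : q ∈ Lset θ) {w : 𝕊} (hw : w ∈ PS θ) :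
    w ∉ ({q.1, q.2} : Set 𝕊) := by
  rintro (rfl | rfl)
  exacts [hX ⟨hq, Or.inr (Or.inl hw)⟩, hX ⟨hq, Or.inr (Or.inr hw)⟩]

lemma PS_subset_arcAt (hX : q ∉ Xset θ) (hq : q ∈ Lset θ) {w : 𝕊} (hw : w ∈ PS θ) :
    PS θ ⊆ arcAt q.1 q.2 w := fun w' hw' => by_contra fun h => hX ⟨hq, Or.inl
    ⟨hq.2, w, hw, w', hw', notMem_pair_of_mem_PS hX hq hw, notMem_pair_of_mem_PS hX hq hw', h⟩⟩

lemma disjoint_PS_closedArc (hX : q ∉ Xset θ) (hq : q ∈ Lset θ) {u v : ℝ} (huv : u < v)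
    (hvu : v < u + 1) (hpair : ({q.1, q.2} : Set 𝕊) = {(u : 𝕊), (v : 𝕊)}) {w : 𝕊}
    (hw : w ∈ PS θ) (hw' : w ∈ openArc v (u + 1)) : Disjoint (PS θ) (closedArc u v) := by
  have hPS : PS θ ⊆ openArc v (u + 1) := by
    rw [← arcAt_coe_of_mem_openArc' huv hvu hw', ← arcAt_eq_of_pair_eq hpair]
    exact PS_subset_arcAt hX hq hw
  have hends : ∀ x ∈ ({(u : 𝕊), (v : 𝕊)} : Set 𝕊), x ∉ PS θ :=
    fun x hx hxPS => notMem_pair_of_mem_PS hX hq hxPS (hpair ▸ hx)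
  rw [closedArc_eq_insert_openArc huv, disjoint_insert_right, disjoint_insert_right]
  exact ⟨hends _ (mem_insert_of_mem _ rfl), hends _ (mem_insert _ _),
    (disjoint_openArc huv hvu).symm.mono_left hPS⟩

structure IsShortLift (θ : ℝ) (q : 𝕋) (u v : ℝ) : Prop where
  pair_eq : ({q.1, q.2} : Set 𝕊) = {(u : 𝕊), (v : 𝕊)}
  lt : u < v
  sub_lt_half : v - u < 1 / 2
  disjoint_PS : Disjoint (PS θ) (closedArc u v)
  left_notMem : ((θ / 2 : ℝ) : 𝕊) ∉ openArc u v
  right_notMem : (((θ + 1) / 2 : ℝ) : 𝕊) ∉ openArc u v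

lemma exists_halfCircle_of_mem_Lset (hq : q ∈ Lset θ) : ∃ s : ℝ,
    ({((θ / 2 : ℝ) : 𝕊), (((θ + 1) / 2 : ℝ) : 𝕊)} : Set 𝕊) = {(s : 𝕊), ((s + 1 / 2 : ℝ) : 𝕊)} ∧
      q.1 ∈ closedArc s (s + 1 / 2) ∧ q.2 ∈ closedArc s (s + 1 / 2) := by
  have hq' := Lset_subset_goodPair θ hq
  rw [goodPair_major] at hq'
  rcases hq' with ⟨h1, h2⟩ | ⟨h1, h2⟩
  · exact ⟨θ / 2, by rw [coe_add_one_div_two], h1, h2⟩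
  · rw [show θ / 2 + 1 = θ / 2 + 1 / 2 + 1 / 2 by ring] at h1 h2
    refine ⟨θ / 2 + 1 / 2, ?_, h1, h2⟩
    rw [show θ / 2 + 1 / 2 + 1 / 2 = θ / 2 + 1 by ring, coe_add_one, coe_add_one_div_two,
      pair_comm]

lemma exists_lifts_mem_Icc {s c : ℝ} (h1 : q.1 ∈ closedArc s c) (h2 : q.2 ∈ closedArc s c) :
    ∃ u v, u ∈ Icc s c ∧ v ∈ Icc s c ∧ u ≤ v ∧
      ({q.1, q.2} : Set 𝕊) = {(u : 𝕊), (v : 𝕊)} := by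
  obtain ⟨r1, hr1, e1⟩ := h1
  obtain ⟨r2, hr2, e2⟩ := h2
  rw [← e1, ← e2]
  rcases le_total r1 r2 with h | h
  exacts [⟨r1, r2, hr1, hr2, h, rfl⟩, ⟨r2, r1, hr2, hr1, h, pair_comm _ _⟩]

lemma isShortLift_of_mem_Icc (hX : q ∉ Xset θ) (hq : q ∈ Lset θ) {s u v : ℝ}
    (hs : ({((θ / 2 : ℝ) : 𝕊), (((θ + 1) / 2 : ℝ) : 𝕊)} : Set 𝕊) =
      {(s : 𝕊), ((s + 1 / 2 : ℝ) : 𝕊)})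
    (hu : u ∈ Icc s (s + 1 / 2)) (hv : v ∈ Icc s (s + 1 / 2)) (huv : u ≤ v)
    (hpair : ({q.1, q.2} : Set 𝕊) = {(u : 𝕊), (v : 𝕊)}) : IsShortLift θ q u v := by
  have hht : halfTheta θ = s ∨ halfTheta θ = ((s + 1 / 2 : ℝ) : 𝕊) := by
    have h := halfTheta_mem_pair θ
    rwa [hs] at h
  have hht_ne : halfTheta θ ≠ u ∧ halfTheta θ ≠ v := by
    simpa [hpair] using notMem_pair_of_mem_PS hX hq (halfTheta_mem_PS θ)
  have huv' : u < v := huv.lt_of_ne fun e => ne_of_pair_eq_pair hpair hq.2 (by rw [e])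
  have hht_out : halfTheta θ ∈ openArc v (u + 1) := by
    rcases hht with h | h <;> rw [h]
    · have : s < u := hu.1.lt_of_ne fun e => hht_ne.1 (by rw [h, e])
      exact ⟨s + 1, ⟨by linarith [hv.2], by linarith⟩, coe_add_one s⟩
    · have : v < s + 1 / 2 := hv.2.lt_of_ne fun e => hht_ne.2 (by rw [h, e])
      exact ⟨s + 1 / 2, ⟨this, by linarith [hu.1]⟩, rfl⟩
  have hsub : v - u < 1 / 2 := by
    by_contra! h
    rcases hht with h' | h'
    · exact hht_ne.1 (by rw [h', show u = s by linarith [hu.1, hv.2]])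
    · exact hht_ne.2 (by rw [h', show v = s + 1 / 2 by linarith [hu.1, hv.2]])
  have hends : ∀ x ∈ ({(s : 𝕊), ((s + 1 / 2 : ℝ) : 𝕊)} : Set 𝕊), x ∉ openArc u v := by
    have hIco : ∀ t ∈ Icc s (s + 1 / 2), t ∈ Ico s (s + 1) := fun t ht =>
      ⟨ht.1, by linarith [ht.2]⟩
    rintro x (rfl | rfl)
    · rw [coe_mem_openArc_iff_of_mem_Ico hu.1 (by linarith [hv.2]) (hIco s ⟨le_rfl, by norm_num⟩)]
      exact fun ht => hu.1.not_gt ht.1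
    · rw [coe_mem_openArc_iff_of_mem_Ico hu.1 (by linarith [hv.2])
        (hIco (s + 1 / 2) ⟨by norm_num, le_rfl⟩)]
      exact fun ht => hv.2.not_gt ht.2
  exact ⟨hpair, huv', hsub,
    disjoint_PS_closedArc hX hq huv' (by linarith) hpair (halfTheta_mem_PS θ) hht_out,
    hends _ (hs ▸ mem_insert _ _), hends _ (hs ▸ mem_insert_of_mem _ rfl)⟩

lemma exists_isShortLift (hX : q ∉ Xset θ) (hq : q ∈ Lset θ) : ∃ u v, IsShortLift θ q u v := by
  obtain ⟨s, hs, h1, h2⟩ := exists_halfCircle_of_mem_Lset hq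
  obtain ⟨u, v, hu, hv, huv, hpair⟩ := exists_lifts_mem_Icc h1 h2
  exact ⟨u, v, isShortLift_of_mem_Icc hX hq hs hu hv huv hpair⟩

end ShortLifts

section Iteration

variable {θ : ℝ} {q : 𝕋} {u v : ℝ}

/-- A point of the doubled arc is the double of a point of the short arc, which is not a
preimage of `θ`. -/
lemma IsShortLift.theta_notMem_openArc (hS : IsShortLift θ q u v) :
    (θ : 𝕊) ∉ openArc (2 * u) (2 * v) := by
  rintro ⟨t, ht, hθ⟩
  have hmem : ((t / 2 : ℝ) : 𝕊) ∈ openArc u v :=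
    ⟨t / 2, ⟨by linarith [ht.1], by linarith [ht.2]⟩, rfl⟩
  have hdbl : dbl ((t / 2 : ℝ) : 𝕊) = θ := by rw [dbl_coe, mul_div_cancel₀ t two_ne_zero, hθ]
  rcases eq_or_eq_of_dbl_eq_coe hdbl with h | h
  exacts [hS.left_notMem (h ▸ hmem), hS.right_notMem (h ▸ hmem)]

lemma IsShortLift.exists_F (hS : IsShortLift θ q u v) (hq : q ∈ Lset θ) (hX : F q ∉ Xset θ) :
    F q ∈ Lset θ ∧ ∃ u' v', IsShortLift θ (F q) u' v' ∧ v' - u' = 2 * (v - u) := by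
  have hpair := pair_F_eq hS.pair_eq
  have h1 : 2 * u < 2 * v := by linarith [hS.lt]
  have h2 : 2 * v < 2 * u + 1 := by linarith [hS.sub_lt_half]
  have hFq : F q ∈ Lset θ :=
    F_mem_Lset hq (ne_of_pair_eq_pair hpair.symm (coe_ne_coe_of_lt h1 h2))
  refine ⟨hFq, ?_⟩
  have hθ : (θ : 𝕊) ∈ openArc (2 * v) (2 * u + 1) := by
    have h := notMem_pair_of_mem_PS hX hFq (theta_mem_PS θ)
    rw [hpair, ← mem_compl_iff, compl_pair_eq_openArc_union h1 h2] at h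
    exact h.resolve_left hS.theta_notMem_openArc
  obtain ⟨u', v', hS'⟩ := exists_isShortLift hX hFq
  rcases coe_pair_eq_coe_pair (hpair.symm.trans hS'.pair_eq) h1 h2 hS'.lt
    (by linarith [hS'.sub_lt_half]) with ⟨k, rfl, rfl⟩ | ⟨k, rfl, rfl⟩
  · exact ⟨_, _, hS', by ring⟩
  · rw [← openArc_add_int k] at hθ
    exact (hS'.disjoint_PS.notMem_of_mem_left (theta_mem_PS θ) (openArc_subset_closedArc hθ)).elim

lemma exists_isShortLift_iterate {p : 𝕋} (hp : p ∈ Lset θ) (hX : ∀ n, F^[n] p ∉ Xset θ) :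
    ∃ c > 0, ∀ n : ℕ, F^[n] p ∈ Lset θ ∧
      ∃ u v, IsShortLift θ (F^[n] p) u v ∧ v - u = 2 ^ n * c := by
  obtain ⟨u, v, hS⟩ := exists_isShortLift (hX 0) hp
  refine ⟨v - u, sub_pos.mpr hS.lt, fun n => ?_⟩
  induction n with
  | zero => exact ⟨hp, u, v, hS, by ring⟩
  | succ n ih =>
    obtain ⟨hL, u', v', hS', hlen⟩ := ih
    have hXn := hX (n + 1)
    rw [Function.iterate_succ_apply'] at hXn ⊢
    obtain ⟨hL', u'', v'', hS'', hlen'⟩ := hS'.exists_F hL hXn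
    exact ⟨hL', u'', v'', hS'', by rw [hlen', hlen, pow_succ]; ring⟩

end Iteration

theorem Xset_attracting_core_general (θ : ℝ) :
    Xset θ ⊆ Lset θ ∧ ∀ p ∈ Lset θ, ∃ n : ℕ, F^[n] p ∈ Xset θ := by
  refine ⟨fun p hp => hp.1, fun p hp => ?_⟩
  by_contra! hX
  obtain ⟨c, hc, hshort⟩ := exists_isShortLift_iterate hp hX
  obtain ⟨n, hn⟩ := pow_unbounded_of_one_lt (1 / c) one_lt_two
  obtain ⟨-, u, v, hS, hlen⟩ := hshort n
  have hlt := hS.sub_lt_half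
  rw [div_lt_iff₀ hc] at hn
  linarith

/-- For rational `θ ∈ (ℝ/ℤ) ∖ {0}` (with representative `θ̂ ∈ (0,1)`),
the set `X_θ` is an attracting core of `L_θ`: `X_θ ⊆ L_θ`, and every point of `L_θ`
reaches `X_θ` under some forward iterate of `F`. -/
theorem Xset_attracting_core (θ : ℝ) (hθ : θ ∈ Ioo (0 : ℝ) 1)
    (hrat : ∃ q : ℚ, (q : ℝ) = θ) :
    Xset θ ⊆ Lset θ ∧ ∀ p ∈ Lset θ, ∃ n : ℕ, F^[n] p ∈ Xset θ :=
  Xset_attracting_core_general θ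
end

section
/- Let θ ∈ (ℝ/ℤ)∖{0} be rational. Then the combinatorial Hubbard tree H_θ = X_θ ∪ P_θ and the set cluster(S_θ) of accumulation points of S_θ in 𝕋 are both compact and F-forward-invariant (i.e., F maps each set into itself); moreover cluster(S_θ) ⊆ H_θ and the set H_θ ∖ cluster(S_θ) is finite. -/
open Set Filter

/-- The diagonal copy `P_θ` of the post-major angle set in the torus. -/
noncomputable def Pdiag (θ : ℝ) : Set 𝕋 := {p | p.1 = p.2 ∧ p.1 ∈ PS θ}

/-- `S_θ`: the pre-major leaves which separate or intersect `P_θ`. -/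
noncomputable def Sset (θ : ℝ) : Set 𝕋 :=
  {p ∈ Pre θ | SepP θ p ∨ IntP θ p}

/-- The set of accumulation points of `S_θ` in the torus. -/
noncomputable def clusterS (θ : ℝ) : Set 𝕋 :=
  {p | AccPt p (Filter.principal (Sset θ))}

/-- The combinatorial Hubbard tree `H_θ = X_θ ∪ P_θ`. -/
noncomputable def Hset (θ : ℝ) : Set 𝕋 := Xset θ ∪ Pdiag θ


/-!
Because `P^S_θ` is finite, the pairs that separate or intersect `P_θ` form a closed set: a limit
of chords separating `u` from `v` either separates them or ends at `u` or `v`. Hence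
`H_θ = {separates or intersects} ∩ (acc(Pre_θ) ∪ Δ)` is closed and contains `cluster(S_θ)`.

Every leaf of `Pre_θ` outside `b_0`, and so every point of `L_θ`, lies in the good region of the
major leaf, i.e. in a closed half circle starting at a preimage of `θ`. Doubling is increasing on
that half circle, so `F` preserves "separates or intersects"; since `F` maps `Pre_θ ∖ b_0` into
`Pre_θ` and has finite fibres, it maps accumulation points to accumulation points.

Separating is an open condition, so a point of `X_θ ∖ cluster(S_θ)` intersects `P_θ`. If exactly
one endpoint `u` is in `P^S_θ`, one of the two arcs from `u` to the other endpoint contains no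
point of `P^S_θ`, and for given `u` and orientation there is at most one such point: for two of
them, leaves of `Pre_θ ∖ S_θ` approximating them, the second of higher level than the first,
would cross, contradicting the good-region condition in the definition of `Pre_θ`.
-/

open Topology

noncomputable def rep (z : 𝕊) : ℝ := (AddCircle.equivIco 1 0 z : ℝ)

lemma rep_mem_Ico (z : 𝕊) : rep z ∈ Ico (0 : ℝ) 1 := by
  simpa [rep] using (AddCircle.equivIco 1 0 z).2

lemma rep_nonneg (z : 𝕊) : 0 ≤ rep z := (rep_mem_Ico z).1

lemma rep_lt_one (z : 𝕊) : rep z < 1 := (rep_mem_Ico z).2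

lemma rep_coe (x : ℝ) : rep (x : 𝕊) = Int.fract x := by
  simp [rep, AddCircle.coe_equivIco_mk_apply]

lemma coe_rep (z : 𝕊) : ((rep z : ℝ) : 𝕊) = z :=
  (AddCircle.equivIco 1 0).symm_apply_apply z

lemma rep_eq_iff {z : 𝕊} {r : ℝ} : rep z = r ↔ r ∈ Ico (0 : ℝ) 1 ∧ (r : 𝕊) = z := by
  constructor
  · rintro rfl
    exact ⟨rep_mem_Ico z, coe_rep z⟩
  · rintro ⟨hr, rfl⟩
    rw [rep_coe, Int.fract_eq_self]
    exact hr

lemma rep_injective : Function.Injective rep := fun z w h => by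
  rw [← coe_rep z, h, coe_rep]

lemma rep_eq_zero_iff {z : 𝕊} : rep z = 0 ↔ z = 0 := by
  simp [rep_eq_iff, eq_comm]

@[simp]
lemma rep_zero : rep 0 = 0 := rep_eq_zero_iff.2 rfl

lemma rep_pos {z : 𝕊} (hz : z ≠ 0) : 0 < rep z :=
  (rep_nonneg z).lt_of_ne fun h => hz (rep_eq_zero_iff.1 h.symm)

lemma rep_neg {z : 𝕊} (hz : z ≠ 0) : rep (-z) = 1 - rep z := by
  rw [rep_eq_iff]
  refine ⟨⟨by linarith [rep_lt_one z], by linarith [rep_pos hz]⟩, ?_⟩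
  simp [AddCircle.coe_period, coe_rep]

lemma rep_sub_of_le {o z w : 𝕊} (h : rep (w - o) ≤ rep (z - o)) :
    rep (z - w) = rep (z - o) - rep (w - o) := by
  rw [rep_eq_iff]
  refine ⟨⟨by linarith, by linarith [rep_lt_one (z - o), rep_nonneg (w - o)]⟩, ?_⟩
  simp only [AddCircle.coe_sub, coe_rep]
  abel

lemma rep_sub_of_lt {o z w : 𝕊} (h : rep (z - o) < rep (w - o)) :
    rep (z - w) = rep (z - o) - rep (w - o) + 1 := by
  rw [rep_eq_iff]
  refine ⟨⟨by linarith [rep_nonneg (z - o), rep_lt_one (w - o)], by linarith⟩, ?_⟩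
  simp only [AddCircle.coe_add, AddCircle.coe_sub, AddCircle.coe_period, coe_rep]
  abel

lemma rep_add_self {z : 𝕊} (h : rep z < 1 / 2) : rep (z + z) = 2 * rep z := by
  rw [rep_eq_iff, two_mul]
  refine ⟨⟨by linarith [rep_nonneg z], by linarith⟩, ?_⟩
  simp only [AddCircle.coe_add, coe_rep]

lemma continuousAt_rep {z : 𝕊} (hz : z ≠ 0) : ContinuousAt rep z :=
  continuous_subtype_val.continuousAt.comp (AddCircle.continuousAt_equivIco 1 0 (by simpa using hz))

lemma rep_lt_or_one_sub_lt_of_norm_lt {z : 𝕊} {ε : ℝ} (h : ‖z‖ < ε) :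
    rep z < ε ∨ 1 - ε < rep z := by
  rw [← coe_rep z, UnitAddCircle.norm_eq] at h
  obtain ⟨h0, h1⟩ := rep_mem_Ico z
  obtain ⟨hl, hu⟩ := abs_le.1 (abs_sub_round (rep z))
  have hl' : (-1 : ℤ) < round (rep z) := by
    exact_mod_cast (show (-1 : ℝ) < round (rep z) by linarith)
  have hu' : round (rep z) < 2 := by
    exact_mod_cast (show (round (rep z) : ℝ) < 2 by linarith)
  obtain hn | hn : round (rep z) = 0 ∨ round (rep z) = 1 := by omega
  · left
    rw [hn] at h
    simpa [abs_of_nonneg h0] using h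
  · right
    rw [hn, abs_sub_comm] at h
    simp only [Int.cast_one] at h
    linarith [le_abs_self (1 - rep z)]

noncomputable def arc (x y : 𝕊) : Set 𝕊 := {z | 0 < rep (z - x) ∧ rep (z - x) < rep (y - x)}

lemma arc_self (x : 𝕊) : arc x x = ∅ :=
  eq_empty_of_forall_notMem fun z hz => by
    have := hz.2
    simp only [sub_self, rep_zero] at this
    exact this.not_gt hz.1

lemma mem_arc_swap {x y z : 𝕊} (hxy : x ≠ y) : z ∈ arc y x ↔ rep (y - x) < rep (z - x) := by
  have hxy' : rep (x - y) = 1 - rep (y - x) := by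
    rw [← neg_sub, rep_neg (sub_ne_zero.2 hxy.symm)]
  show 0 < rep (z - y) ∧ rep (z - y) < rep (x - y) ↔ _
  rw [hxy']
  rcases lt_trichotomy (rep (y - x)) (rep (z - x)) with h | h | h
  · rw [rep_sub_of_le h.le]
    exact iff_of_true ⟨by linarith, by linarith [rep_lt_one (z - x)]⟩ h
  · obtain rfl : z = y := by simpa using rep_injective h.symm
    simp
  · rw [rep_sub_of_lt h]
    exact iff_of_false (fun h' => by linarith [h'.2, rep_nonneg (z - x)]) h.not_gt

lemma arc_disjoint_swap (x y : 𝕊) : Disjoint (arc x y) (arc y x) := by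
  rcases eq_or_ne x y with rfl | hxy
  · simp [arc_self]
  · exact Set.disjoint_left.2 fun z hz hz' => ((mem_arc_swap hxy).1 hz').not_gt hz.2

lemma compl_pair_eq_arc_union {x y : 𝕊} (hxy : x ≠ y) :
    ({x, y}ᶜ : Set 𝕊) = arc x y ∪ arc y x := by
  ext z
  simp only [mem_compl_iff, mem_insert_iff, mem_singleton_iff, not_or, mem_union,
    mem_arc_swap hxy]
  constructor
  · rintro ⟨hzx, hzy⟩
    have h0 : 0 < rep (z - x) := rep_pos (sub_ne_zero.2 hzx)
    rcases lt_trichotomy (rep (z - x)) (rep (y - x)) with h | h | h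
    · exact Or.inl ⟨h0, h⟩
    · exact absurd (by simpa using rep_injective h) hzy
    · exact Or.inr h
  · rintro (h | h)
    · refine ⟨fun hzx => ?_, fun hzy => ?_⟩ <;> subst z
      · simp [arc] at h
      · exact h.2.ne rfl
    · refine ⟨fun hzx => ?_, fun hzy => ?_⟩ <;> subst z
      · simp only [sub_self, rep_zero] at h; linarith [rep_nonneg (y - x)]
      · exact h.ne rfl

lemma arc_eq_image (x y : 𝕊) : arc x y = (fun t : ℝ => x + t) '' Ioo 0 (rep (y - x)) := by
  ext z
  constructor
  · intro hz
    exact ⟨rep (z - x), hz, by simp [coe_rep]⟩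
  · rintro ⟨t, ht, rfl⟩
    have : rep (x + t - x) = t :=
      rep_eq_iff.2 ⟨⟨ht.1.le, ht.2.trans (rep_lt_one _)⟩, by simp⟩
    show 0 < rep (x + t - x) ∧ rep (x + t - x) < rep (y - x)
    rw [this]
    exact ht

lemma isOpen_arc (x y : 𝕊) : IsOpen (arc x y) := by
  rw [arc_eq_image, ← image_image (fun z : 𝕊 => x + z) ((↑) : ℝ → 𝕊)]
  exact (Homeomorph.addLeft x).isOpenMap _ (QuotientAddGroup.isOpenMap_coe _ isOpen_Ioo)

lemma isPreconnected_arc (x y : 𝕊) : IsPreconnected (arc x y) := by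
  rw [arc_eq_image]
  exact isPreconnected_Ioo.image _ (by fun_prop)

lemma arc_nonempty {x y : 𝕊} (hxy : x ≠ y) : (arc x y).Nonempty := by
  have hy : 0 < rep (y - x) := rep_pos (sub_ne_zero.2 hxy.symm)
  rw [arc_eq_image]
  exact ⟨_, mem_image_of_mem _ (show rep (y - x) / 2 ∈ _ from ⟨by linarith, by linarith⟩)⟩

lemma closure_arc_subset (x y : 𝕊) : closure (arc x y) ⊆ arc x y ∪ {x, y} := by
  rcases eq_or_ne x y with rfl | hxy
  · simp [arc_self]
  intro z hz
  have hz' : z ∉ arc y x :=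
    Set.disjoint_left.1 ((arc_disjoint_swap x y).closure_left (isOpen_arc y x)) hz
  by_contra h
  simp only [mem_union, not_or] at h
  have := (compl_pair_eq_arc_union hxy ▸ h.2 : z ∈ arc x y ∪ arc y x)
  exact this.elim h.1 hz'

lemma rep_sub_le_of_mem_closure_arc {x y z : 𝕊} (hz : z ∈ closure (arc x y)) :
    rep (z - x) ≤ rep (y - x) := by
  rcases closure_arc_subset x y hz with h | h | h
  · exact h.2.le
  · simp [h, rep_nonneg]
  · rw [mem_singleton_iff.1 h]

lemma rep_sub_mem_Ioo_of_mem_arc {o a b z : 𝕊} (hab : rep (a - o) < rep (b - o))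
    (hz : z ∈ arc a b) : rep (a - o) < rep (z - o) ∧ rep (z - o) < rep (b - o) := by
  have hzb := hz.2
  rw [rep_sub_of_le hab.le] at hzb
  have hza : rep (z - o) = rep (z - a) + rep (a - o) := by
    refine rep_eq_iff.2 ⟨⟨by linarith [rep_nonneg (z - a), rep_nonneg (a - o)],
      by linarith [rep_lt_one (b - o)]⟩, ?_⟩
    simp only [AddCircle.coe_add, coe_rep]
    abel
  constructor <;> linarith [hz.1]

lemma connectedComponentIn_union_eq_left {X : Type*} [TopologicalSpace X] {A B : Set X} {z : X}
    (hA : IsOpen A) (hB : IsOpen B) (hAB : Disjoint A B) (hA' : IsPreconnected A) (hz : z ∈ A) :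
    connectedComponentIn (A ∪ B) z = A := by
  refine Subset.antisymm ?_ (hA'.subset_connectedComponentIn hz subset_union_left)
  rcases isPreconnected_connectedComponentIn.subset_or_subset hA hB hAB
    (connectedComponentIn_subset _ _) with h | h
  · exact h
  · exact absurd (h (mem_connectedComponentIn (Or.inl hz))) (Set.disjoint_left.1 hAB hz)

lemma arcAt_comm (x y z : 𝕊) : arcAt x y z = arcAt y x z := by
  rw [arcAt, arcAt, pair_comm]

lemma arcAt_eq_arc {x y z : 𝕊} (hxy : x ≠ y) (hz : z ∈ arc x y) : arcAt x y z = arc x y := by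
  rw [arcAt, compl_pair_eq_arc_union hxy]
  exact connectedComponentIn_union_eq_left (isOpen_arc x y) (isOpen_arc y x)
    (arc_disjoint_swap x y) (isPreconnected_arc x y) hz

lemma goodPair_eq {x y : 𝕊} (hxy : x ≠ y) : goodPair x y =
    closure (arc x y) ×ˢ closure (arc x y) ∪ closure (arc y x) ×ˢ closure (arc y x) := by
  ext p
  constructor
  · rintro ⟨z, hz, h⟩
    rcases compl_pair_eq_arc_union hxy ▸ hz with hz | hz
    · rw [arcAt_eq_arc hxy hz] at h
      exact Or.inl h
    · rw [arcAt_comm, arcAt_eq_arc hxy.symm hz] at h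
      exact Or.inr h
  · rintro (h | h)
    · obtain ⟨z, hz⟩ := arc_nonempty hxy
      refine ⟨z, compl_pair_eq_arc_union hxy ▸ Or.inl hz, ?_⟩
      rwa [arcAt_eq_arc hxy hz]
    · obtain ⟨z, hz⟩ := arc_nonempty hxy.symm
      refine ⟨z, compl_pair_eq_arc_union hxy ▸ Or.inr hz, ?_⟩
      rwa [arcAt_comm, arcAt_eq_arc hxy.symm hz]

lemma isClosed_goodPair {x y : 𝕊} (hxy : x ≠ y) : IsClosed (goodPair x y) := by
  rw [goodPair_eq hxy]
  exact (isClosed_closure.prod isClosed_closure).union (isClosed_closure.prod isClosed_closure)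

def Separates (x y z w : 𝕊) : Prop :=
  z ∈ arc x y ∧ w ∈ arc y x ∨ z ∈ arc y x ∧ w ∈ arc x y

lemma Separates.swap_left {x y z w : 𝕊} (h : Separates x y z w) : Separates y x z w := h.symm

lemma Separates.swap_right {x y z w : 𝕊} (h : Separates x y z w) : Separates x y w z :=
  h.symm.imp And.symm And.symm

lemma Separates.ne {x y z w : 𝕊} (h : Separates x y z w) : x ≠ y := by
  rintro rfl
  simp [Separates, arc_self] at h

lemma separates_of_rep_sub_lt {o a b c d : 𝕊} (hab : rep (a - o) < rep (b - o))
    (hbc : rep (b - o) < rep (c - o)) (hcd : rep (c - o) < rep (d - o)) :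
    Separates a c b d ∧ Separates b d a c := by
  have := rep_nonneg (a - o)
  have := rep_lt_one (d - o)
  refine ⟨Or.inl ⟨?_, ?_⟩, Or.inr ⟨?_, ?_⟩⟩
  · show 0 < rep (b - a) ∧ rep (b - a) < rep (c - a)
    rw [rep_sub_of_le hab.le, rep_sub_of_le (hab.trans hbc).le]
    constructor <;> linarith
  · show 0 < rep (d - c) ∧ rep (d - c) < rep (a - c)
    rw [rep_sub_of_le hcd.le, rep_sub_of_lt (hab.trans hbc)]
    constructor <;> linarith
  · show 0 < rep (a - d) ∧ rep (a - d) < rep (b - d)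
    rw [rep_sub_of_lt (hab.trans (hbc.trans hcd)), rep_sub_of_lt (hbc.trans hcd)]
    constructor <;> linarith
  · show 0 < rep (c - b) ∧ rep (c - b) < rep (d - b)
    rw [rep_sub_of_le hbc.le, rep_sub_of_le (hbc.trans hcd).le]
    constructor <;> linarith

lemma Separates.symm {x y z w : 𝕊} (h : Separates x y z w) : Separates z w x y := by
  have hxy := h.ne
  have h0 : rep (x - x) = 0 := by simp
  rcases h with ⟨hz, hw⟩ | ⟨hz, hw⟩
  · rw [mem_arc_swap hxy] at hw
    exact (separates_of_rep_sub_lt (h0 ▸ hz.1) hz.2 hw).2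
  · rw [mem_arc_swap hxy] at hz
    exact (separates_of_rep_sub_lt (h0 ▸ hw.1) hw.2 hz).2.swap_left

lemma not_separates_of_mem_goodPair {x y : 𝕊} {r : 𝕋} (hr : r ∈ goodPair x y) :
    ¬ Separates x y r.1 r.2 := by
  intro hs
  have d₁ := Set.disjoint_left.1 ((arc_disjoint_swap x y).closure_left (isOpen_arc y x))
  have d₂ := Set.disjoint_left.1 ((arc_disjoint_swap y x).closure_left (isOpen_arc x y))
  rw [goodPair_eq hs.ne] at hr
  rcases hr with ⟨h₁, h₂⟩ | ⟨h₁, h₂⟩ <;> rcases hs with ⟨s₁, s₂⟩ | ⟨s₁, s₂⟩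
  exacts [d₁ h₂ s₂, d₁ h₁ s₁, d₂ h₁ s₁, d₂ h₂ s₂]

/-- The angular coordinate of `z` seen from `u`: counterclockwise for `s = 1`, clockwise for
`s = -1`. -/
noncomputable def coordAt (s : ℤˣ) (u z : 𝕊) : ℝ := rep (s • (z - u))

section coordAt
variable {s : ℤˣ} {u z : 𝕊}

lemma coordAt_one : coordAt 1 u z = rep (z - u) := by simp [coordAt]

lemma coordAt_neg_one (hz : z ≠ u) : coordAt (-1) u z = 1 - coordAt 1 u z := by
  simp only [coordAt, Units.neg_smul, one_smul, neg_sub]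
  rw [← neg_sub, rep_neg (sub_ne_zero.2 hz)]

lemma coordAt_eq_zero_iff : coordAt s u z = 0 ↔ z = u := by
  rw [coordAt, rep_eq_zero_iff, smul_eq_zero_iff_eq, sub_eq_zero]

@[simp]
lemma coordAt_self : coordAt s u u = 0 := coordAt_eq_zero_iff.2 rfl

lemma coordAt_pos (hz : z ≠ u) : 0 < coordAt s u z :=
  (rep_nonneg _).lt_of_ne fun h => hz (coordAt_eq_zero_iff.1 h.symm)

lemma coordAt_lt_one : coordAt s u z < 1 := rep_lt_one _

lemma coordAt_injective (s : ℤˣ) (u : 𝕊) : Function.Injective (coordAt s u) :=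
  fun _ _ h => sub_left_injective (MulAction.injective s (rep_injective h))

lemma continuousAt_coordAt (hz : z ≠ u) : ContinuousAt (coordAt s u) z :=
  (continuousAt_rep (by rwa [smul_ne_zero_iff_ne, sub_ne_zero])).comp (by fun_prop)

lemma coordAt_lt_or_one_sub_lt {ε : ℝ} (h : ‖z - u‖ < ε) :
    coordAt s u z < ε ∨ 1 - ε < coordAt s u z := by
  refine rep_lt_or_one_sub_lt_of_norm_lt ?_
  rcases Int.units_eq_one_or s with rfl | rfl
  · simpa using h
  · simpa [norm_sub_rev] using h

lemma separates_of_coordAt_lt {a b c d : 𝕊} (hab : coordAt s u a < coordAt s u b)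
    (hbc : coordAt s u b < coordAt s u c) (hcd : coordAt s u c < coordAt s u d) :
    Separates a c b d := by
  rcases Int.units_eq_one_or s with rfl | rfl
  · simp only [coordAt_one] at hab hbc hcd
    exact (separates_of_rep_sub_lt hab hbc hcd).1
  have hne : ∀ {e}, coordAt (-1) u a < coordAt (-1) u e → e ≠ u := fun h he => by
    subst he
    simp only [coordAt_self] at h
    exact h.not_ge (rep_nonneg _)
  have hb := hne hab
  have hc := hne (hab.trans hbc)
  have hd := hne (hab.trans (hbc.trans hcd))
  rw [coordAt_neg_one hb, coordAt_neg_one hc] at hbc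
  rw [coordAt_neg_one hc, coordAt_neg_one hd] at hcd
  simp only [coordAt_one] at hbc hcd
  rcases eq_or_ne a u with rfl | ha
  · have hd0 := coordAt_pos (s := 1) hd
    rw [coordAt_one] at hd0
    have h0 : rep (a - a) = 0 := by simp
    exact (separates_of_rep_sub_lt (h0 ▸ hd0) (by linarith) (by linarith)).1.swap_right
  · rw [coordAt_neg_one ha, coordAt_neg_one hb] at hab
    simp only [coordAt_one] at hab
    exact (separates_of_rep_sub_lt (by linarith) (by linarith) (by linarith)).2.swap_left.swap_right

end coordAt

section derivedSet
variable {X : Type*} [TopologicalSpace X] [T1Space X]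

lemma derivedSet_eq_empty_of_finite {K : Set X} (hK : K.Finite) : derivedSet K = ∅ := by
  ext x
  simp [accPt_principal_iff_nhdsWithin, ← mem_closure_iff_nhdsWithin_neBot,
    hK.sdiff.isClosed.closure_eq]

lemma derivedSet_diff_of_finite (A : Set X) {K : Set X} (hK : K.Finite) :
    derivedSet (A \ K) = derivedSet A := by
  refine Subset.antisymm (derivedSet_mono _ _ sdiff_subset) ?_
  calc derivedSet A ⊆ derivedSet (A \ K ∪ K) := derivedSet_mono _ _ (by simp)
    _ = derivedSet (A \ K) := by
      rw [derivedSet_union, derivedSet_eq_empty_of_finite hK, union_empty]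

omit [T1Space X] in
lemma derivedSet_inter_subset_of_isOpen {A U : Set X} (hU : IsOpen U) :
    derivedSet A ∩ U ⊆ derivedSet (A ∩ U) := by
  rintro x ⟨hx, hxU⟩
  rw [mem_derivedSet, accPt_iff_nhds] at hx ⊢
  intro V hV
  obtain ⟨y, ⟨hyV, hyA⟩, hyx⟩ := hx (V ∩ U) (inter_mem hV (hU.mem_nhds hxU))
  exact ⟨y, ⟨hyV.1, hyA, hyV.2⟩, hyx⟩

lemma exists_mem_diff_of_mem_derivedSet_diff {A S K N : Set X} {p : X}
    (hp : p ∈ derivedSet A \ derivedSet S) (hK : K.Finite) (hN : N ∈ 𝓝 p) :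
    ∃ q ∈ N, q ∈ A \ S ∧ q ∉ K := by
  have hAS : p ∈ derivedSet (A \ S) := by
    have := derivedSet_mono _ _ (show A ⊆ A \ S ∪ S by simp) hp.1
    rw [derivedSet_union] at this
    exact this.resolve_right hp.2
  rw [← derivedSet_diff_of_finite _ hK, mem_derivedSet, accPt_iff_nhds] at hAS
  obtain ⟨q, ⟨hqN, hqA, hqK⟩, -⟩ := hAS N hN
  exact ⟨q, hqN, hqA, hqK⟩

lemma mapsTo_derivedSet_of_finite_fibers {Y : Type*} [TopologicalSpace Y] {f : X → Y}
    (hf : Continuous f) (hfib : ∀ y, (f ⁻¹' {y}).Finite) {A : Set X} {B : Set Y}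
    (hAB : MapsTo f A B) : MapsTo f (derivedSet A) (derivedSet B) := by
  intro x hx
  rw [← derivedSet_diff_of_finite A (hfib (f x)), mem_derivedSet, accPt_iff_nhds] at hx
  rw [mem_derivedSet, accPt_iff_nhds]
  intro V hV
  obtain ⟨y, ⟨hyV, hyA, hyx⟩, -⟩ := hx _ (hf.continuousAt.preimage_mem_nhds hV)
  exact ⟨f y, ⟨hyV, hAB hyA⟩, hyx⟩

end derivedSet

lemma F_apply (p : 𝕋) : F p = (dbl p.1, dbl p.2) := rfl

lemma finite_preimage_dbl (c : 𝕊) : (dbl ⁻¹' {c}).Finite := by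
  rcases (dbl ⁻¹' {c}).eq_empty_or_nonempty with h | ⟨z₀, hz₀⟩
  · simp [h]
  refine ((AddCircle.finite_torsion (1 : ℝ) two_pos).image (z₀ + ·)).subset fun z hz =>
    ⟨z - z₀, ?_, by simp⟩
  simp only [mem_preimage, mem_singleton_iff, dbl] at hz hz₀
  show 2 • (z - z₀) = 0
  rw [two_nsmul, show z - z₀ + (z - z₀) = (z + z) - (z₀ + z₀) by abel, hz, hz₀, sub_self]

lemma finite_preimage_F (p : 𝕋) : (F ⁻¹' {p}).Finite :=
  ((finite_preimage_dbl p.1).prod (finite_preimage_dbl p.2)).subset fun q hq => by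
    rw [mem_preimage, mem_singleton_iff, F_apply, Prod.ext_iff] at hq
    exact hq

lemma dbl_eq_of_rep_sub {z c : 𝕊} (h : rep (z - c) = 0 ∨ rep (z - c) = 1 / 2) :
    dbl z = dbl c := by
  have h2 : (z - c) + (z - c) = 0 := by
    rcases h with h | h
    · rw [rep_eq_zero_iff.1 h, add_zero]
    · rw [← coe_rep (z - c), h, ← AddCircle.coe_add]
      norm_num
  rw [dbl, dbl, ← sub_eq_zero, ← h2]
  abel

lemma rep_dbl_sub_dbl {z c : 𝕊} (h : rep (z - c) < 1 / 2) :
    rep (dbl z - dbl c) = 2 * rep (z - c) := by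
  rw [← rep_add_self h, dbl, dbl]
  congr 1
  abel

lemma dbl_iterate (n : ℕ) (x : 𝕊) : dbl^[n] x = 2 ^ n • x := by
  induction n with
  | zero => simp
  | succ n ih => rw [Function.iterate_succ_apply', ih, dbl, ← two_nsmul, smul_smul, pow_succ']

section theta
variable {θ : ℝ}

noncomputable def majorLeaf (θ : ℝ) : 𝕋 := (((θ / 2 : ℝ) : 𝕊), (((θ + 1) / 2 : ℝ) : 𝕊))

lemma preSeq_zero : preSeq θ 0 = {majorLeaf θ, (majorLeaf θ).swap} := rfl

lemma rep_majorLeaf_snd_sub_fst : rep ((majorLeaf θ).2 - (majorLeaf θ).1) = 1 / 2 := by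
  refine rep_eq_iff.2 ⟨by norm_num, ?_⟩
  rw [majorLeaf, ← AddCircle.coe_sub]
  congr 1
  ring

lemma rep_majorLeaf_fst_sub_snd : rep ((majorLeaf θ).1 - (majorLeaf θ).2) = 1 / 2 := by
  refine rep_eq_iff.2 ⟨by norm_num, ?_⟩
  rw [majorLeaf, ← AddCircle.coe_sub, show (1 / 2 : ℝ) = θ / 2 - (θ + 1) / 2 + 1 by ring,
    AddCircle.coe_add, AddCircle.coe_period, add_zero]

lemma majorLeaf_fst_ne_snd : (majorLeaf θ).1 ≠ (majorLeaf θ).2 := fun h => by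
  have := rep_majorLeaf_snd_sub_fst (θ := θ)
  rw [h, sub_self, rep_zero] at this
  norm_num at this

lemma dbl_majorLeaf_fst : dbl (majorLeaf θ).1 = θ := by
  rw [majorLeaf, dbl, ← AddCircle.coe_add]
  congr 1
  ring

lemma dbl_majorLeaf_snd : dbl (majorLeaf θ).2 = θ := by
  rw [majorLeaf, dbl, ← AddCircle.coe_add, show (θ + 1) / 2 + (θ + 1) / 2 = θ + 1 by ring,
    AddCircle.coe_add, AddCircle.coe_period, add_zero]

lemma coe_mem_PS : ((θ : ℝ) : 𝕊) ∈ PS θ := Or.inr ⟨0, rfl⟩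

lemma dbl_halfTheta : dbl (halfTheta θ) = θ := by
  unfold halfTheta
  split_ifs
  exacts [dbl_majorLeaf_fst, dbl_majorLeaf_snd, dbl_majorLeaf_fst]

lemma dbl_mem_PS {u : 𝕊} (hu : u ∈ PS θ) : dbl u ∈ PS θ := by
  rcases hu with rfl | ⟨n, rfl⟩
  · rw [dbl_halfTheta]
    exact coe_mem_PS
  · exact Or.inr ⟨n + 1, (Function.iterate_succ_apply' _ _ _).symm⟩

lemma PS_finite (hrat : ∃ q : ℚ, (q : ℝ) = θ) : (PS θ).Finite := by
  obtain ⟨q, rfl⟩ := hrat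
  refine (finite_singleton _).union ((AddCircle.finite_torsion (1 : ℝ) q.den_pos).subset ?_)
  rintro _ ⟨n, rfl⟩
  have hq : q.den • (((q : ℝ) : ℝ) : 𝕊) = 0 := by
    rw [← AddCircle.coe_nsmul, nsmul_eq_mul, AddCircle.coe_eq_zero_iff]
    exact ⟨q.num, by simp only [Rat.cast_def, zsmul_eq_mul, mul_one]; field_simp⟩
  show q.den • dbl^[n] _ = 0
  rw [dbl_iterate, smul_comm, hq, smul_zero]

lemma exists_mem_PS_ne (hθ : ((θ : ℝ) : 𝕊) ≠ 0) (u : 𝕊) : ∃ w ∈ PS θ, w ≠ u := by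
  by_cases hu : u = θ
  · refine ⟨dbl θ, dbl_mem_PS coe_mem_PS, fun h => hθ ?_⟩
    rw [hu, dbl] at h
    simpa using h
  · exact ⟨θ, coe_mem_PS, Ne.symm hu⟩

lemma preSeq_mono : Monotone (preSeq θ) :=
  monotone_nat_of_le_succ fun _ => subset_union_right

lemma preSeq_finite (n : ℕ) : (preSeq θ n).Finite := by
  induction n with
  | zero => simp [preSeq_zero]
  | succ n ih => exact ((ih.preimage' fun p _ => finite_preimage_F p).inter_of_left _).union ih

lemma exists_level {q : 𝕋} {n N : ℕ} (hq : q ∈ preSeq θ n) (hqN : q ∉ preSeq θ N) :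
    ∃ l, N ≤ l ∧ F q ∈ preSeq θ l ∧ q ∈ good (preSeq θ l) := by
  induction n with
  | zero => exact absurd (preSeq_mono (Nat.zero_le N) hq) hqN
  | succ n ih =>
    rcases hq with ⟨hF, hg⟩ | hq
    · refine ⟨n, ?_, hF, hg⟩
      by_contra! h
      exact hqN (preSeq_mono h (Or.inl ⟨hF, hg⟩))
    · exact ih hq

lemma fst_ne_snd_of_mem_preSeq {q : 𝕋} {n : ℕ} (hq : q ∈ preSeq θ n) : q.1 ≠ q.2 := by
  induction n generalizing q with
  | zero =>
    rcases hq with rfl | rfl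
    exacts [majorLeaf_fst_ne_snd, majorLeaf_fst_ne_snd.symm]
  | succ n ih =>
    rcases hq with ⟨hF, -⟩ | hq
    · exact fun h => ih hF (by rw [F_apply, h])
    · exact ih hq

lemma not_separates_of_mem_preSeq {q r : 𝕋} {M : ℕ} (hq : q ∈ preSeq θ M) (hr : r ∈ Pre θ)
    (hrM : r ∉ preSeq θ M) : ¬ Separates q.1 q.2 r.1 r.2 := by
  obtain ⟨n, hn⟩ := mem_iUnion.1 hr
  obtain ⟨l, hMl, -, hgood⟩ := exists_level hn hrM
  exact not_separates_of_mem_goodPair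
    (hgood q (preSeq_mono hMl hq) (fst_ne_snd_of_mem_preSeq hq))

lemma mem_goodPair_majorLeaf {q : 𝕋} (hq : q ∈ Pre θ) (hq₀ : q ∉ preSeq θ 0) :
    q ∈ goodPair (majorLeaf θ).1 (majorLeaf θ).2 := by
  obtain ⟨n, hn⟩ := mem_iUnion.1 hq
  obtain ⟨l, -, -, hgood⟩ := exists_level hn hq₀
  exact hgood _ (preSeq_mono (Nat.zero_le l) (Or.inl rfl)) majorLeaf_fst_ne_snd

lemma F_mem_Pre {q : 𝕋} (hq : q ∈ Pre θ) (hq₀ : q ∉ preSeq θ 0) : F q ∈ Pre θ := by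
  obtain ⟨n, hn⟩ := mem_iUnion.1 hq
  obtain ⟨l, -, hF, -⟩ := exists_level hn hq₀
  exact mem_iUnion.2 ⟨l, hF⟩

lemma derivedSet_Pre_subset_goodPair :
    derivedSet (Pre θ) ⊆ goodPair (majorLeaf θ).1 (majorLeaf θ).2 := by
  rw [← derivedSet_diff_of_finite _ (preSeq_finite 0)]
  exact (derivedSet_subset_closure _).trans <| closure_minimal
    (fun q hq => mem_goodPair_majorLeaf hq.1 hq.2) (isClosed_goodPair majorLeaf_fst_ne_snd)

lemma mapsTo_F_derivedSet_Pre : MapsTo F (derivedSet (Pre θ)) (derivedSet (Pre θ)) := by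
  intro p hp
  rw [← derivedSet_diff_of_finite (Pre θ) (preSeq_finite 0)] at hp
  exact mapsTo_derivedSet_of_finite_fibers continuous_F finite_preimage_F
    (fun q hq => F_mem_Pre hq.1 hq.2) hp

lemma swap_mem_preSeq {q : 𝕋} {n : ℕ} (hq : q ∈ preSeq θ n) : q.swap ∈ preSeq θ n := by
  induction n generalizing q with
  | zero =>
    rcases hq with rfl | rfl
    exacts [Or.inr rfl, Or.inl rfl]
  | succ n ih =>
    rcases hq with ⟨hF, hg⟩ | hq
    · refine Or.inl ⟨ih hF, fun r hr hne => ?_⟩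
      obtain ⟨z, hz, h₁, h₂⟩ := hg r hr hne
      exact ⟨z, hz, h₂, h₁⟩
    · exact Or.inr (ih hq)

lemma swap_mem_Pre {q : 𝕋} (hq : q ∈ Pre θ) : q.swap ∈ Pre θ := by
  obtain ⟨n, hn⟩ := mem_iUnion.1 hq
  exact mem_iUnion.2 ⟨n, swap_mem_preSeq hn⟩

end theta

section sepOrInt
variable {θ : ℝ}

def sepOrInt (θ : ℝ) : Set 𝕋 := {p | SepP θ p ∨ IntP θ p}

lemma sepP_iff {p : 𝕋} : SepP θ p ↔ ∃ u ∈ PS θ, ∃ v ∈ PS θ, Separates p.1 p.2 u v := by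
  constructor
  · rintro ⟨hne, u, hu, v, hv, huc, hvc, hval⟩
    rw [compl_pair_eq_arc_union hne] at huc hvc
    refine ⟨u, hu, v, hv, ?_⟩
    rcases huc with huc | huc
    · rw [arcAt_eq_arc hne huc] at hval
      exact Or.inl ⟨huc, hvc.resolve_left hval⟩
    · rw [arcAt_comm, arcAt_eq_arc hne.symm huc] at hval
      exact Or.inr ⟨huc, hvc.resolve_right hval⟩
  · rintro ⟨u, hu, v, hv, hs⟩
    have hne := hs.ne
    refine ⟨hne, u, hu, v, hv, ?_⟩
    rw [compl_pair_eq_arc_union hne]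
    rcases hs with ⟨huc, hvc⟩ | ⟨huc, hvc⟩
    · refine ⟨Or.inl huc, Or.inr hvc, ?_⟩
      rw [arcAt_eq_arc hne huc]
      exact Set.disjoint_right.1 (arc_disjoint_swap _ _) hvc
    · refine ⟨Or.inr huc, Or.inl hvc, ?_⟩
      rw [arcAt_comm, arcAt_eq_arc hne.symm huc]
      exact Set.disjoint_right.1 (arc_disjoint_swap _ _) hvc

lemma sepP_iff_exists_mem_arc {p : 𝕋} :
    SepP θ p ↔ (∃ u ∈ PS θ, u ∈ arc p.1 p.2) ∧ ∃ v ∈ PS θ, v ∈ arc p.2 p.1 := by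
  rw [sepP_iff]
  constructor
  · rintro ⟨u, hu, v, hv, ⟨h₁, h₂⟩ | ⟨h₁, h₂⟩⟩
    exacts [⟨⟨u, hu, h₁⟩, v, hv, h₂⟩, ⟨⟨v, hv, h₂⟩, u, hu, h₁⟩]
  · rintro ⟨⟨u, hu, h₁⟩, v, hv, h₂⟩
    exact ⟨u, hu, v, hv, Or.inl ⟨h₁, h₂⟩⟩

lemma sepP_swap {p : 𝕋} : SepP θ p.swap ↔ SepP θ p := by
  simp only [sepP_iff, Prod.fst_swap, Prod.snd_swap]
  exact ⟨fun ⟨u, hu, v, hv, h⟩ => ⟨u, hu, v, hv, h.swap_left⟩,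
    fun ⟨u, hu, v, hv, h⟩ => ⟨u, hu, v, hv, h.swap_left⟩⟩

lemma swap_mem_sepOrInt {p : 𝕋} (hp : p ∈ sepOrInt θ) : p.swap ∈ sepOrInt θ :=
  hp.imp sepP_swap.2 Or.symm

lemma setOf_sepP_eq :
    {p | SepP θ p} = ⋃ u ∈ PS θ, ⋃ v ∈ PS θ, {p : 𝕋 | Separates u v p.1 p.2} := by
  ext p
  simp only [mem_ofPred_eq, mem_iUnion, exists_prop, sepP_iff]
  exact ⟨fun ⟨u, hu, v, hv, h⟩ => ⟨u, hu, v, hv, h.symm⟩,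
    fun ⟨u, hu, v, hv, h⟩ => ⟨u, hu, v, hv, h.symm⟩⟩

lemma isOpen_setOf_separates (u v : 𝕊) : IsOpen {p : 𝕋 | Separates u v p.1 p.2} :=
  ((isOpen_arc u v).prod (isOpen_arc v u)).union ((isOpen_arc v u).prod (isOpen_arc u v))

lemma isOpen_setOf_sepP : IsOpen {p | SepP θ p} := by
  rw [setOf_sepP_eq]
  exact isOpen_biUnion fun u _ => isOpen_biUnion fun v _ => isOpen_setOf_separates u v

lemma closure_setOf_separates_subset (u v : 𝕊) :
    closure {p : 𝕋 | Separates u v p.1 p.2} ⊆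
      {p | Separates u v p.1 p.2 ∨ p.1 ∈ ({u, v} : Set 𝕊) ∨ p.2 ∈ ({u, v} : Set 𝕊)} := by
  intro p hp
  have : p ∈ closure (arc u v ×ˢ arc v u ∪ arc v u ×ˢ arc u v) := hp
  rw [closure_union, closure_prod_eq, closure_prod_eq] at this
  rcases this with ⟨h₁, h₂⟩ | ⟨h₁, h₂⟩
  · rcases closure_arc_subset u v h₁ with h₁ | h₁
    · rcases closure_arc_subset v u h₂ with h₂ | h₂
      · exact Or.inl (Or.inl ⟨h₁, h₂⟩)
      · exact Or.inr (Or.inr (pair_comm v u ▸ h₂))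
    · exact Or.inr (Or.inl h₁)
  · rcases closure_arc_subset v u h₁ with h₁ | h₁
    · rcases closure_arc_subset u v h₂ with h₂ | h₂
      · exact Or.inl (Or.inr ⟨h₁, h₂⟩)
      · exact Or.inr (Or.inr h₂)
    · exact Or.inr (Or.inl (pair_comm v u ▸ h₁))

lemma isClosed_sepOrInt (hfin : (PS θ).Finite) : IsClosed (sepOrInt θ) := by
  have hInt : IsClosed {p : 𝕋 | IntP θ p} :=
    (hfin.isClosed.preimage continuous_fst).union (hfin.isClosed.preimage continuous_snd)
  rw [← closure_subset_iff_isClosed, show sepOrInt θ = {p | SepP θ p} ∪ {p | IntP θ p} from rfl,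
    closure_union, hInt.closure_eq]
  refine union_subset (fun p hp => ?_) subset_union_right
  simp only [setOf_sepP_eq, hfin.closure_biUnion, mem_iUnion, exists_prop] at hp
  obtain ⟨u, hu, v, hv, hp⟩ := hp
  rcases closure_setOf_separates_subset u v hp with h | h | h
  · exact Or.inl (sepP_iff.2 ⟨u, hu, v, hv, h.symm⟩)
  · exact Or.inr (Or.inl (by rcases h with rfl | rfl; exacts [hu, hv]))
  · exact Or.inr (Or.inr (by rcases h with rfl | rfl; exacts [hu, hv]))

lemma exists_halfCircle_of_mem_goodPair {p : 𝕋}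
    (hp : p ∈ goodPair (majorLeaf θ).1 (majorLeaf θ).2) :
    ∃ c : 𝕊, dbl c = θ ∧ rep (p.1 - c) ≤ 1 / 2 ∧ rep (p.2 - c) ≤ 1 / 2 := by
  rw [goodPair_eq majorLeaf_fst_ne_snd] at hp
  rcases hp with ⟨h₁, h₂⟩ | ⟨h₁, h₂⟩
  · refine ⟨_, dbl_majorLeaf_fst, ?_, ?_⟩ <;> rw [← rep_majorLeaf_snd_sub_fst (θ := θ)]
    exacts [rep_sub_le_of_mem_closure_arc h₁, rep_sub_le_of_mem_closure_arc h₂]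
  · refine ⟨_, dbl_majorLeaf_snd, ?_, ?_⟩ <;> rw [← rep_majorLeaf_fst_sub_snd (θ := θ)]
    exacts [rep_sub_le_of_mem_closure_arc h₁, rep_sub_le_of_mem_closure_arc h₂]

/-- Doubling is increasing on the open half circle starting at `c`. -/
lemma separates_dbl {c x y m : 𝕊} (hx : 0 < rep (x - c)) (hxy : rep (x - c) < rep (y - c))
    (hy : rep (y - c) < 1 / 2) (hm : m ∈ arc x y) :
    Separates (dbl x) (dbl y) (dbl c) (dbl m) := by
  obtain ⟨hxm, hmy⟩ := rep_sub_mem_Ioo_of_mem_arc hxy hm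
  have h0 : rep (dbl c - dbl c) = 0 := by simp
  refine (separates_of_rep_sub_lt (o := dbl c) ?_ ?_ ?_).2
  · rw [h0, rep_dbl_sub_dbl (hxy.trans hy)]
    linarith
  · rw [rep_dbl_sub_dbl (hxy.trans hy), rep_dbl_sub_dbl (hmy.trans hy)]
    linarith
  · rw [rep_dbl_sub_dbl (hmy.trans hy), rep_dbl_sub_dbl hy]
    linarith

lemma intP_F {p : 𝕋} (hp : IntP θ p) : IntP θ (F p) := hp.imp dbl_mem_PS dbl_mem_PS

lemma F_mem_sepOrInt_of_sepP {p : 𝕋} (hp : SepP θ p)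
    (hgood : p ∈ goodPair (majorLeaf θ).1 (majorLeaf θ).2) : F p ∈ sepOrInt θ := by
  obtain ⟨c, hc, h₁, h₂⟩ := exists_halfCircle_of_mem_goodPair hgood
  by_cases e₁ : rep (p.1 - c) = 0 ∨ rep (p.1 - c) = 1 / 2
  · exact Or.inr (Or.inl (by rw [F_apply, dbl_eq_of_rep_sub e₁, hc]; exact coe_mem_PS))
  by_cases e₂ : rep (p.2 - c) = 0 ∨ rep (p.2 - c) = 1 / 2
  · exact Or.inr (Or.inr (by rw [F_apply, dbl_eq_of_rep_sub e₂, hc]; exact coe_mem_PS))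
  push Not at e₁ e₂
  have h₁0 := (rep_nonneg _).lt_of_ne' e₁.1
  have h₂0 := (rep_nonneg _).lt_of_ne' e₂.1
  have hne : rep (p.1 - c) ≠ rep (p.2 - c) := fun h => hp.1 (by simpa using rep_injective h)
  obtain ⟨⟨u, hu, hu'⟩, v, hv, hv'⟩ := sepP_iff_exists_mem_arc.1 hp
  refine Or.inl (sepP_iff.2 ⟨θ, coe_mem_PS, ?_⟩)
  rw [← hc]
  rcases hne.lt_or_gt with h | h
  · exact ⟨dbl u, dbl_mem_PS hu, separates_dbl h₁0 h (h₂.lt_of_ne e₂.2) hu'⟩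
  · exact ⟨dbl v, dbl_mem_PS hv, (separates_dbl h₂0 h (h₁.lt_of_ne e₁.2) hv').swap_left⟩

lemma Hset_eq : Hset θ = sepOrInt θ ∩ (derivedSet (Pre θ) ∪ diagonal 𝕊) := by
  ext p
  constructor
  · rintro (⟨⟨hacc, -⟩, h⟩ | ⟨hd, hp⟩)
    exacts [⟨h, Or.inl hacc⟩, ⟨Or.inr (Or.inl hp), Or.inr hd⟩]
  · rintro ⟨h, hp⟩
    by_cases hd : p.1 = p.2
    · refine Or.inr ⟨hd, ?_⟩
      rcases h with h | h | h
      exacts [absurd hd h.1, h, hd ▸ h]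
    · exact Or.inl ⟨⟨hp.resolve_right hd, hd⟩, h⟩

lemma isClosed_Hset (hfin : (PS θ).Finite) : IsClosed (Hset θ) := by
  rw [Hset_eq]
  exact (isClosed_sepOrInt hfin).inter ((isClosed_derivedSet _).union isClosed_diagonal)

lemma clusterS_subset_Hset (hfin : (PS θ).Finite) : clusterS θ ⊆ Hset θ := by
  intro p hp
  rw [Hset_eq]
  refine ⟨(isClosed_sepOrInt hfin).closure_subset ?_, Or.inl ?_⟩
  · exact closure_mono (fun q hq => hq.2) (derivedSet_subset_closure _ hp)
  · exact derivedSet_mono _ _ (fun q hq => hq.1) hp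

lemma mapsTo_F_Hset : MapsTo F (Hset θ) (Hset θ) := by
  rw [Hset_eq]
  rintro p ⟨hp, hacc | hd⟩
  · refine ⟨?_, Or.inl (mapsTo_F_derivedSet_Pre hacc)⟩
    rcases hp with h | h
    exacts [F_mem_sepOrInt_of_sepP h (derivedSet_Pre_subset_goodPair hacc), Or.inr (intP_F h)]
  · refine ⟨Or.inr (intP_F (hp.resolve_left fun h => h.1 hd)), Or.inr ?_⟩
    show dbl p.1 = dbl p.2
    rw [show p.1 = p.2 from hd]

lemma mapsTo_F_clusterS : MapsTo F (clusterS θ) (clusterS θ) := by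
  intro p hp
  rw [clusterS, ← derivedSet, ← derivedSet_diff_of_finite _ (preSeq_finite 0)] at hp
  refine mapsTo_derivedSet_of_finite_fibers continuous_F finite_preimage_F ?_ hp
  rintro q ⟨⟨hq, hq'⟩, hq₀⟩
  refine ⟨F_mem_Pre hq hq₀, ?_⟩
  rcases hq' with h | h
  exacts [F_mem_sepOrInt_of_sepP h (mem_goodPair_majorLeaf hq hq₀), Or.inr (intP_F h)]

end sepOrInt

lemma swap_mem_derivedSet {X : Type*} [TopologicalSpace X] {A : Set (X × X)}
    (hA : ∀ q ∈ A, q.swap ∈ A) {p : X × X} (hp : p ∈ derivedSet A) : p.swap ∈ derivedSet A :=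
  derivedSet_mono _ _ (image_subset_iff.2 hA)
    (continuous_swap.image_derivedSet Prod.swap_injective (mem_image_of_mem _ hp))

section finiteness
variable {θ : ℝ}

lemma mem_clusterS_of_sepP {p : 𝕋} (hp : p ∈ derivedSet (Pre θ)) (hsep : SepP θ p) :
    p ∈ clusterS θ :=
  derivedSet_mono _ (Sset θ) (fun _ hq => ⟨hq.1, Or.inl hq.2⟩)
    (derivedSet_inter_subset_of_isOpen isOpen_setOf_sepP ⟨hp, hsep⟩)

lemma swap_mem_derivedSet_Pre_diff_clusterS {p : 𝕋} (hp : p ∈ derivedSet (Pre θ) \ clusterS θ) :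
    p.swap ∈ derivedSet (Pre θ) \ clusterS θ :=
  ⟨swap_mem_derivedSet (fun _ hq => swap_mem_Pre hq) hp.1, fun h => hp.2 <| by
    have := swap_mem_derivedSet (A := Sset θ)
      (fun _ hq => ⟨swap_mem_Pre hq.1, swap_mem_sepOrInt hq.2⟩) h
    rwa [Prod.swap_swap] at this⟩

variable {s : ℤˣ} {u w : 𝕊}

lemma eventually_near_leaf {y : 𝕊} (hy : y ≠ u) {ε : ℝ} (hε : 0 < ε) :
    ∀ᶠ q : 𝕋 in 𝓝 (u, y), ‖q.1 - u‖ < ε ∧ |coordAt s u q.2 - coordAt s u y| < ε := by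
  have h₁ : ∀ᶠ q : 𝕋 in 𝓝 (u, y), ‖q.1 - u‖ < ε :=
    (show Continuous fun q : 𝕋 => ‖q.1 - u‖ by fun_prop).continuousAt.eventually
      (gt_mem_nhds (by simpa using hε))
  have h₂ : ContinuousAt (fun q : 𝕋 => coordAt s u q.2) (u, y) :=
    ContinuousAt.comp (f := Prod.snd) (continuousAt_coordAt hy) continuousAt_snd
  exact h₁.and (h₂.eventually (eventually_abs_sub_lt _ hε))

lemma coordAt_fst_lt_of_notMem_Sset {q : 𝕋} {ε : ℝ} (hu : u ∈ PS θ) (hw : w ∈ PS θ) (hq : q ∈ Pre θ)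
    (hqS : q ∉ Sset θ) (h₁ : ‖q.1 - u‖ < ε) (h₂ : 0 < coordAt s u q.2)
    (h₂w : coordAt s u q.2 < coordAt s u w) (hw₁ : coordAt s u w < 1 - ε) :
    0 < coordAt s u q.1 ∧ coordAt s u q.1 < ε := by
  have hq₁ : q.1 ≠ u := fun h => hqS ⟨hq, Or.inr (Or.inl (h ▸ hu))⟩
  refine ⟨coordAt_pos hq₁, (coordAt_lt_or_one_sub_lt h₁).resolve_right fun h => hqS ⟨hq, Or.inl ?_⟩⟩
  have : Separates u w q.2 q.1 :=
    separates_of_coordAt_lt (by simpa using h₂) h₂w (by linarith)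
  exact sepP_iff.2 ⟨u, hu, w, hw, this.symm.swap_left⟩

/-- Leaves of `Pre_θ ∖ S_θ` close to `(u, y')` and, of higher level, close to `(u, y)` would
cross. -/
lemma notMem_derivedSet_diff_clusterS_of_coordAt_lt {y y' : 𝕊} (hu : u ∈ PS θ) (hw : w ∈ PS θ)
    (hy : 0 < coordAt s u y) (hyy' : coordAt s u y < coordAt s u y')
    (hy'w : coordAt s u y' < coordAt s u w) (hp : (u, y) ∈ derivedSet (Pre θ) \ clusterS θ) :
    (u, y') ∉ derivedSet (Pre θ) \ clusterS θ := by
  intro hp'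
  set t := coordAt s u
  have hw₁ : t w < 1 := coordAt_lt_one
  obtain ⟨δ, hδ, hδy, hδyy', hδy'w, hδw⟩ : ∃ δ : ℝ, 0 < δ ∧ 2 * δ ≤ t y ∧
      2 * δ ≤ t y' - t y ∧ 2 * δ ≤ t w - t y' ∧ 2 * δ ≤ 1 - t w := by
    set m := min (min (t y) (t y' - t y)) (min (t w - t y') (1 - t w))
    have hm : 0 < m := lt_min (lt_min hy (by linarith)) (lt_min (by linarith) (by linarith))
    have h₁ : m ≤ t y := (min_le_left _ _).trans (min_le_left _ _)
    have h₂ : m ≤ t y' - t y := (min_le_left _ _).trans (min_le_right _ _)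
    have h₃ : m ≤ t w - t y' := (min_le_right _ _).trans (min_le_left _ _)
    have h₄ : m ≤ 1 - t w := (min_le_right _ _).trans (min_le_right _ _)
    exact ⟨m / 2, by linarith, by linarith, by linarith, by linarith, by linarith⟩
  have hne : ∀ {z}, 0 < t z → z ≠ u := fun h hz => by simp [t, hz] at h
  obtain ⟨q, ⟨hq₁, hq₂⟩, ⟨hqPre, hqS⟩, -⟩ := exists_mem_diff_of_mem_derivedSet_diff hp'
    finite_empty (eventually_near_leaf (hne (hy.trans hyy')) hδ)
  obtain ⟨hq₂l, hq₂u⟩ := abs_lt.1 hq₂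
  obtain ⟨hq0, hqδ⟩ :=
    coordAt_fst_lt_of_notMem_Sset hu hw hqPre hqS hq₁ (by linarith) (by linarith) (by linarith)
  obtain ⟨M, hqM⟩ := mem_iUnion.1 hqPre
  set ε := min δ (t q.1)
  have hεδ : ε ≤ δ := min_le_left _ _
  have hεq : ε ≤ t q.1 := min_le_right _ _
  obtain ⟨r, ⟨hr₁, hr₂⟩, ⟨hrPre, hrS⟩, hrM⟩ := exists_mem_diff_of_mem_derivedSet_diff hp
    (preSeq_finite M) (eventually_near_leaf (hne hy) (lt_min hδ hq0))
  obtain ⟨hr₂l, hr₂u⟩ := abs_lt.1 hr₂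
  obtain ⟨-, hrε⟩ :=
    coordAt_fst_lt_of_notMem_Sset hu hw hrPre hrS hr₁ (by linarith) (by linarith) (by linarith)
  exact not_separates_of_mem_preSeq hqM hrPre hrM
    (separates_of_coordAt_lt (s := s) (u := u) (by linarith) (by linarith) (by linarith)).symm

def freeLeaves (θ : ℝ) (s : ℤˣ) : Set 𝕋 :=
  {p ∈ derivedSet (Pre θ) \ clusterS θ | p.1 ∈ PS θ ∧ p.2 ∉ PS θ ∧
    ∀ w ∈ PS θ, ¬ (0 < coordAt s p.1 w ∧ coordAt s p.1 w < coordAt s p.1 p.2)}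

lemma not_coordAt_lt_of_mem_freeLeaves (hθ : ((θ : ℝ) : 𝕊) ≠ 0) {y y' : 𝕊}
    (hp : (u, y) ∈ freeLeaves θ s) (hp' : (u, y') ∈ freeLeaves θ s) :
    ¬ coordAt s u y < coordAt s u y' := by
  obtain ⟨hp, hu, hy, -⟩ := hp
  obtain ⟨hp', -, hy', hfree⟩ := hp'
  obtain ⟨w, hw, hwu⟩ := exists_mem_PS_ne hθ u
  have hy'w : coordAt s u y' < coordAt s u w :=
    (not_lt.1 fun h => hfree w hw ⟨coordAt_pos hwu, h⟩).lt_of_ne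
      fun h => hy' (coordAt_injective s u h ▸ hw)
  have hyu : y ≠ u := fun h => hy (show y ∈ PS θ by rw [h]; exact hu)
  exact fun h => notMem_derivedSet_diff_clusterS_of_coordAt_lt hu hw (coordAt_pos hyu) h hy'w hp hp'

lemma injOn_fst_freeLeaves (hθ : ((θ : ℝ) : 𝕊) ≠ 0) (s : ℤˣ) :
    InjOn Prod.fst (freeLeaves θ s) := by
  rintro ⟨u, y⟩ hp ⟨u', y'⟩ hp' (rfl : u = u')
  have h₁ := not_coordAt_lt_of_mem_freeLeaves hθ hp hp'
  have h₂ := not_coordAt_lt_of_mem_freeLeaves hθ hp' hp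
  rw [coordAt_injective s u (le_antisymm (not_lt.1 h₂) (not_lt.1 h₁))]

lemma finite_freeLeaves (hθ : ((θ : ℝ) : 𝕊) ≠ 0) (hfin : (PS θ).Finite) (s : ℤˣ) :
    (freeLeaves θ s).Finite :=
  Finite.of_finite_image (hfin.subset (image_subset_iff.2 fun _ hp => hp.2.1))
    (injOn_fst_freeLeaves hθ s)

lemma exists_mem_freeLeaves {p : 𝕋} (hp : p ∈ derivedSet (Pre θ) \ clusterS θ)
    (h₁ : p.1 ∈ PS θ) (h₂ : p.2 ∉ PS θ) : ∃ s, p ∈ freeLeaves θ s := by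
  by_contra! h
  have hfree : ∀ s : ℤˣ, ∃ w ∈ PS θ, 0 < coordAt s p.1 w ∧ coordAt s p.1 w < coordAt s p.1 p.2 := by
    intro s
    by_contra! h'
    exact h s ⟨hp, h₁, h₂, fun w hw hw' => (h' w hw hw'.1).not_gt hw'.2⟩
  obtain ⟨w₁, hw₁, h₁0, h₁2⟩ := hfree 1
  obtain ⟨w₂, hw₂, h₂0, h₂2⟩ := hfree (-1)
  have hw₂ne : w₂ ≠ p.1 := fun h => by simp [h] at h₂0
  have hp₂ : p.2 ≠ p.1 := fun h => h₂ (h ▸ h₁)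
  rw [coordAt_neg_one hw₂ne, coordAt_neg_one hp₂] at h₂2
  exact hp.2 (mem_clusterS_of_sepP hp.1 (sepP_iff.2 ⟨w₁, hw₁, w₂, hw₂,
    separates_of_coordAt_lt (s := 1) (u := p.1) (by simpa using h₁0) h₁2 (by linarith)⟩))

lemma finite_Hset_diff_clusterS (hθ : ((θ : ℝ) : 𝕊) ≠ 0) (hfin : (PS θ).Finite) :
    (Hset θ \ clusterS θ).Finite := by
  have hfree : (⋃ s, freeLeaves θ s).Finite := finite_iUnion (finite_freeLeaves hθ hfin)
  refine (((hfin.prod hfin).union hfree).union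
    (hfree.preimage Prod.swap_injective.injOn)).subset ?_
  rintro p ⟨hH, hpc⟩
  rw [Hset_eq] at hH
  obtain ⟨hsi, hacc | hd⟩ := hH
  · have hint : IntP θ p := hsi.resolve_left fun h => hpc (mem_clusterS_of_sepP hacc h)
    by_cases h₁ : p.1 ∈ PS θ <;> by_cases h₂ : p.2 ∈ PS θ
    · exact Or.inl (Or.inl ⟨h₁, h₂⟩)
    · exact Or.inl (Or.inr (mem_iUnion.2 (exists_mem_freeLeaves ⟨hacc, hpc⟩ h₁ h₂)))
    · exact Or.inr (mem_iUnion.2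
        (exists_mem_freeLeaves (swap_mem_derivedSet_Pre_diff_clusterS ⟨hacc, hpc⟩) h₂ h₁))
    · exact (hint.elim h₁ h₂).elim
  · have hd : p.1 = p.2 := hd
    have h₁ : p.1 ∈ PS θ := (hsi.resolve_left fun h => h.1 hd).elim id (hd ▸ ·)
    exact Or.inl (Or.inl ⟨h₁, hd ▸ h₁⟩)

end finiteness

/-- For rational `θ ∈ (ℝ/ℤ) ∖ {0}` (with representative `θ̂ ∈ (0,1)`),
the combinatorial Hubbard tree `H_θ` and the set `cluster(S_θ)` of accumulation points
of `S_θ` are compact and `F`-forward-invariant; moreover `cluster(S_θ) ⊆ H_θ` and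
`H_θ ∖ cluster(S_θ)` is finite. -/
theorem hubbardTree_compact_invariant (θ : ℝ) (hθ : θ ∈ Ioo (0 : ℝ) 1)
    (hrat : ∃ q : ℚ, (q : ℝ) = θ) :
    IsCompact (Hset θ) ∧ IsCompact (clusterS θ) ∧
    MapsTo F (Hset θ) (Hset θ) ∧ MapsTo F (clusterS θ) (clusterS θ) ∧
    clusterS θ ⊆ Hset θ ∧ (Hset θ \ clusterS θ).Finite := by
  have hθ' : ((θ : ℝ) : 𝕊) ≠ 0 := fun h => by
    have := rep_eq_zero_iff.2 h
    rw [rep_coe, Int.fract_eq_self.2 ⟨hθ.1.le, hθ.2⟩] at this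
    exact hθ.1.ne' this
  have hfin := PS_finite hrat
  exact ⟨(isClosed_Hset hfin).isCompact, (isClosed_derivedSet (Sset θ)).isCompact, mapsTo_F_Hset,
    mapsTo_F_clusterS, clusterS_subset_Hset hfin, finite_Hset_diff_clusterS hθ' hfin⟩
end
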